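/- arXiv:2112.11720 — 2 statements merged into one kernel-verified Lean document; each statement's English description precedes it below -/
import Mathlib

section
/- If G is a minimal counterexample (as defined in the context), then every B₁-vertex v of G has at least one 2-step neighbor of degree 2; in particular, v has a neighbor in B₁ and a neighbor in A₂. -/
/-!
For a vertex `t`, an independent dominating set of `G - N[t]` together with `t` is an independent
dominating set of `G`, so minimality gives `w(G) < w(G - N[t]) + 14`. As `G` has no 4-cycle, every
vertex outside `N[t]` loses at most one neighbour in `G - N[t]`, so this bounds `w(N[t])` by `14`
plus the weight gained at distance two from `t`. Around `v ∈ B₁`, with neighbours `u` of degree 2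
and `x`, and `y` the other neighbour of `u`, this reduction first forces `deg x = 3` and
`deg y = 3`, so `u ∈ B₁`. It then shows that `x` has neither three neighbours of degree 2 nor
only `v`, so `x ∈ A₂` and its second neighbour of degree 2 is a 2-step neighbour of `v`.
-/

open Set

/-- The degree of a vertex `v` in a simple graph `G`. -/
noncomputable def deg {V : Type*} (G : SimpleGraph V) (v : V) : ℕ :=
  (G.neighborSet v).ncard

/-- `S` is a dominating set of `G`: every vertex not in `S` has a neighbor in `S`. -/
def IsDomSet {V : Type*} (G : SimpleGraph V) (S : Set V) : Prop :=
  ∀ v ∉ S, ∃ u ∈ S, G.Adj u v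

/-- `S` is an independent dominating set of `G`. -/
def IsIndepDomSet {V : Type*} (G : SimpleGraph V) (S : Set V) : Prop :=
  IsDomSet G S ∧ ∀ u ∈ S, ∀ v ∈ S, ¬ G.Adj u v

/-- The independent domination number `i(G)`. -/
noncomputable def indepDomNum {V : Type*} (G : SimpleGraph V) : ℕ :=
  sInf {n | ∃ S : Set V, IsIndepDomSet G S ∧ S.ncard = n}

/-- The domination number `γ(G)`. -/
noncomputable def domNum {V : Type*} (G : SimpleGraph V) : ℕ :=
  sInf {n | ∃ S : Set V, IsDomSet G S ∧ S.ncard = n}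

/-- `G` contains no cycle on 4 vertices as a subgraph. -/
def NoFourCycle {V : Type*} (G : SimpleGraph V) : Prop :=
  ¬ ∃ a b c d : V, a ≠ b ∧ a ≠ c ∧ a ≠ d ∧ b ≠ c ∧ b ≠ d ∧ c ≠ d ∧
      G.Adj a b ∧ G.Adj b c ∧ G.Adj c d ∧ G.Adj d a

/-- `nk G k` is the number of vertices of degree `k` in `G`. -/
noncomputable def nk {V : Type*} (G : SimpleGraph V) (k : ℕ) : ℕ :=
  {v | deg G v = k}.ncard

/-- The weight of a vertex: 14, 9, 6, 5 according as its degree is 0, 1, 2, 3. -/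
noncomputable def wt {V : Type*} (G : SimpleGraph V) (v : V) : ℕ :=
  if deg G v = 0 then 14 else if deg G v = 1 then 9 else if deg G v = 2 then 6 else 5

/-- The weight of a set of vertices: the sum of their weights. -/
noncomputable def wtSet {V : Type*} (G : SimpleGraph V) (X : Set V) : ℕ :=
  ∑ᶠ v ∈ X, wt G v

/-- The weight of the whole graph `G`. -/
noncomputable def wtGraph {V : Type*} (G : SimpleGraph V) : ℕ :=
  wtSet G Set.univ

/-- `G` is a minimal counterexample: subcubic, no 4-cycle, `14·i(G) > w(G)`,
and every proper subgraph `H` of `G` satisfies `14·i(H) ≤ w(H)`. -/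
def MinimalCounterexample {V : Type*} [Fintype V] (G : SimpleGraph V) : Prop :=
  (∀ v, deg G v ≤ 3) ∧ NoFourCycle G ∧ wtGraph G < 14 * indepDomNum G ∧
    ∀ H : G.Subgraph, H ≠ ⊤ → 14 * indepDomNum H.coe ≤ wtGraph H.coe

/-- `Aset G i`: vertices of degree 3 with exactly `i` neighbors of degree 2. -/
def Aset {V : Type*} (G : SimpleGraph V) (i : ℕ) : Set V :=
  {v | deg G v = 3 ∧ {u | G.Adj v u ∧ deg G u = 2}.ncard = i}

/-- `Bset G i`: vertices of degree 2 with exactly `i` neighbors of degree 2. -/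
def Bset {V : Type*} (G : SimpleGraph V) (i : ℕ) : Set V :=
  {v | deg G v = 2 ∧ {u | G.Adj v u ∧ deg G u = 2}.ncard = i}

/-- `w` is a 2-step neighbor of `v`: it is joined to `v` by a path of length 2. -/
def TwoStep {V : Type*} (G : SimpleGraph V) (v w : V) : Prop :=
  w ≠ v ∧ ∃ u, G.Adj v u ∧ G.Adj u w

open SimpleGraph

namespace SimpleGraph

variable {V : Type*} {G : SimpleGraph V} {a b c d w : V}

lemma deg_eq_card_neighborFinset [Fintype V] [DecidableRel G.Adj] (v : V) :
    deg G v = (G.neighborFinset v).card :=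
  Set.ncard_eq_toFinset_card' _

lemma adj_iff_of_deg_eq_one (ha : deg G a = 1) (hb : G.Adj a b) : G.Adj a w ↔ w = b := by
  obtain ⟨c, hc⟩ := Set.ncard_eq_one.1 ha
  have hb' : b ∈ G.neighborSet a := hb
  rw [hc, Set.mem_singleton_iff] at hb'
  rw [← mem_neighborSet, hc, hb']
  rfl

variable [Finite V]

lemma deg_pos_of_adj (h : G.Adj a b) : 0 < deg G a :=
  (Set.ncard_pos (Set.toFinite _)).2 ⟨b, h⟩

lemma adj_iff_of_deg_eq_two (ha : deg G a = 2) (hb : G.Adj a b) (hc : G.Adj a c) (hbc : b ≠ c) :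
    G.Adj a w ↔ w = b ∨ w = c := by
  have : G.neighborSet a = {b, c} := by
    refine (Set.eq_of_subset_of_ncard_le ?_ ?_ (Set.toFinite _)).symm
    · rintro z (rfl | rfl) <;> assumption
    · rw [Set.ncard_pair hbc]; exact ha.le
  rw [← mem_neighborSet, this]
  rfl

lemma adj_iff_of_deg_eq_three (ha : deg G a = 3) (hb : G.Adj a b) (hc : G.Adj a c)
    (hd : G.Adj a d) (hbc : b ≠ c) (hbd : b ≠ d) (hcd : c ≠ d) :
    G.Adj a w ↔ w = b ∨ w = c ∨ w = d := by
  have : G.neighborSet a = {b, c, d} := by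
    refine (Set.eq_of_subset_of_ncard_le ?_ ?_ (Set.toFinite _)).symm
    · rintro z (rfl | rfl | rfl) <;> assumption
    · rw [Set.ncard_eq_three.2 ⟨b, c, d, hbc, hbd, hcd, rfl⟩]; exact ha.le
  rw [← mem_neighborSet, this]
  rfl

lemma exists_adj_notMem {s : Set V} (h : s.ncard < deg G a) : ∃ c, G.Adj a c ∧ c ∉ s := by
  by_contra! h'
  exact absurd (Set.ncard_le_ncard h' (Set.toFinite s)) (not_le.2 h)

lemma exists_adj_ne (h : 1 < deg G a) (b : V) : ∃ c, G.Adj a c ∧ c ≠ b := by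
  simpa using exists_adj_notMem (s := {b}) (by rwa [Set.ncard_singleton])

lemma exists_adj_ne_ne (h : 2 < deg G a) (b c : V) : ∃ d, G.Adj a d ∧ d ≠ b ∧ d ≠ c := by
  simpa using exists_adj_notMem (s := {b, c})
    ((Set.ncard_insert_le b {c}).trans_lt (by rwa [Set.ncard_singleton]))

lemma exists_adj_ne_ne_of_deg_eq_three (ha : deg G a = 3) (b : V) :
    ∃ c d, G.Adj a c ∧ G.Adj a d ∧ c ≠ b ∧ d ≠ b ∧ c ≠ d := by
  obtain ⟨c, hac, hcb⟩ := exists_adj_ne (show 1 < deg G a by omega) b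
  obtain ⟨d, had, hdb, hdc⟩ := exists_adj_ne_ne (show 2 < deg G a by omega) b c
  exact ⟨c, d, hac, had, hcb, hdb, Ne.symm hdc⟩

end SimpleGraph

section DegreeClasses

variable {V : Type*} [Finite V] {G : SimpleGraph V}

lemma exists_of_mem_Bset_one {v : V} (hv : v ∈ Bset G 1) :
    ∃ u x, G.Adj v u ∧ G.Adj v x ∧ u ≠ x ∧ deg G u = 2 ∧ deg G x ≠ 2 := by
  obtain ⟨hv2, h1⟩ := hv
  obtain ⟨u, hu⟩ := Set.ncard_eq_one.1 h1
  have hmem : ∀ w, G.Adj v w ∧ deg G w = 2 ↔ w = u := fun w => Set.ext_iff.1 hu w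
  obtain ⟨x, hvx, hxu⟩ := exists_adj_ne (show 1 < deg G v by omega) u
  obtain ⟨hvu, hu2⟩ := (hmem u).2 rfl
  exact ⟨u, x, hvu, hvx, Ne.symm hxu, hu2, fun hx2 => hxu ((hmem x).1 ⟨hvx, hx2⟩)⟩

lemma mem_Bset_one {u v y : V} (hu : deg G u = 2) (huv : G.Adj u v) (huy : G.Adj u y)
    (hvy : v ≠ y) (hv : deg G v = 2) (hy : deg G y ≠ 2) : u ∈ Bset G 1 := by
  refine ⟨hu, ?_⟩
  have hNu : ∀ w, G.Adj u w ↔ w = v ∨ w = y := fun w => adj_iff_of_deg_eq_two hu huv huy hvy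
  have : {w | G.Adj u w ∧ deg G w = 2} = {v} := by
    ext w
    simp only [Set.mem_ofPred_eq, Set.mem_singleton_iff, hNu]
    grind
  rw [this, Set.ncard_singleton]

lemma mem_Aset_two {x v c d : V} (hx : deg G x = 3) (hxv : G.Adj x v) (hxc : G.Adj x c)
    (hxd : G.Adj x d) (hvc : v ≠ c) (hvd : v ≠ d) (hcd : c ≠ d) (hv : deg G v = 2)
    (hc : deg G c = 2) (hd : deg G d ≠ 2) : x ∈ Aset G 2 := by
  refine ⟨hx, ?_⟩
  have hNx : ∀ w, G.Adj x w ↔ w = v ∨ w = c ∨ w = d := fun w =>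
    adj_iff_of_deg_eq_three hx hxv hxc hxd hvc hvd hcd
  have : {w | G.Adj x w ∧ deg G w = 2} = {v, c} := by
    ext w
    simp only [Set.mem_ofPred_eq, Set.mem_insert_iff, Set.mem_singleton_iff, hNx]
    grind
  rw [this, Set.ncard_pair hvc]

end DegreeClasses

lemma Finset.sum_insert_le {ι M : Type*} [AddCommMonoid M] [PartialOrder M]
    [CanonicallyOrderedAdd M] [DecidableEq ι] (f : ι → M) (a : ι) (s : Finset ι) :
    ∑ i ∈ insert a s, f i ≤ f a + ∑ i ∈ s, f i := by
  by_cases h : a ∈ s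
  · rw [Finset.insert_eq_of_mem h]
    exact le_add_self
  · rw [Finset.sum_insert h]

def weightOfDeg (d : ℕ) : ℕ :=
  if d = 0 then 14 else if d = 1 then 9 else if d = 2 then 6 else 5

/-- The increase `weightOfDeg (d - 1) - weightOfDeg d` of the weight of a subcubic vertex when
its degree drops by one. -/
def dropCost : ℕ → ℕ
  | 1 => 5
  | 2 => 3
  | 3 => 1
  | _ => 0

lemma wt_eq_weightOfDeg {V : Type*} (G : SimpleGraph V) (v : V) :
    wt G v = weightOfDeg (deg G v) := rfl

lemma weightOfDeg_antitone : Antitone weightOfDeg := by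
  intro a b h
  unfold weightOfDeg
  split_ifs <;> omega

lemma weightOfDeg_sub_one_le (d : ℕ) : weightOfDeg (d - 1) ≤ weightOfDeg d + dropCost d := by
  rcases d with _ | _ | _ | _ | d <;> simp [weightOfDeg, dropCost]

lemma dropCost_le_five (d : ℕ) : dropCost d ≤ 5 := by
  unfold dropCost; split <;> omega

lemma dropCost_le_three {d : ℕ} (h : d ≠ 1) : dropCost d ≤ 3 := by
  unfold dropCost; split <;> omega

section IndepDom

variable {V : Type*} {G : SimpleGraph V}

lemma indepDomNum_le_ncard {S : Set V} (h : IsIndepDomSet G S) : indepDomNum G ≤ S.ncard :=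
  Nat.sInf_le ⟨S, h, rfl⟩

variable [Finite V]

lemma exists_isIndepDomSet (G : SimpleGraph V) : ∃ S, IsIndepDomSet G S := by
  obtain ⟨S, hS, hmax⟩ := Set.Finite.exists_maximal
    (Set.toFinite {S : Set V | ∀ u ∈ S, ∀ v ∈ S, ¬ G.Adj u v}) ⟨∅, by simp⟩
  refine ⟨S, fun z hz => ?_, hS⟩
  by_contra! hcon
  have hins : ∀ u ∈ insert z S, ∀ v ∈ insert z S, ¬ G.Adj u v := by
    rintro u (rfl | hu) v (rfl | hv) huv
    · exact G.irrefl huv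
    · exact hcon v hv huv.symm
    · exact hcon u hu huv
    · exact hS u hu v hv huv
  exact hz (hmax hins (Set.subset_insert z S) (Set.mem_insert z S))

lemma exists_isIndepDomSet_ncard_eq (G : SimpleGraph V) :
    ∃ S, IsIndepDomSet G S ∧ S.ncard = indepDomNum G := by
  obtain ⟨S, hS⟩ := exists_isIndepDomSet G
  exact Nat.sInf_mem (s := {n | ∃ S : Set V, IsIndepDomSet G S ∧ S.ncard = n}) ⟨_, S, hS, rfl⟩

lemma indepDomNum_le_induce_compl_add_one (t : V) :
    indepDomNum G ≤
      indepDomNum ((⊤ : G.Subgraph).induce (insert t (G.neighborSet t))ᶜ).coe + 1 := by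
  set X := insert t (G.neighborSet t)
  obtain ⟨I, hI, hIcard⟩ := exists_isIndepDomSet_ncard_eq ((⊤ : G.Subgraph).induce Xᶜ).coe
  have hadj : ∀ a b : ↥(Xᶜ), ((⊤ : G.Subgraph).induce Xᶜ).coe.Adj a b ↔ G.Adj a b := fun a b =>
    ⟨fun h => h.2.2, fun h => ⟨a.2, b.2, h⟩⟩
  have hJ : IsIndepDomSet G (insert t (Subtype.val '' I)) := by
    constructor
    · intro z hz
      by_cases hzX : z ∈ X
      · rcases hzX with rfl | hzt
        · exact absurd (Set.mem_insert _ _) hz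
        · exact ⟨t, Set.mem_insert _ _, hzt⟩
      · have hzI : (⟨z, hzX⟩ : ↥(Xᶜ)) ∉ I := fun h => hz (Set.mem_insert_of_mem _ ⟨_, h, rfl⟩)
        obtain ⟨i, hi, hiz⟩ := hI.1 _ hzI
        exact ⟨i, Set.mem_insert_of_mem _ ⟨i, hi, rfl⟩, (hadj _ _).1 hiz⟩
    · rintro _ (rfl | ⟨a, ha, rfl⟩) _ (rfl | ⟨b, hb, rfl⟩) hab
      · exact G.irrefl hab
      · exact b.2 (Set.mem_insert_of_mem _ hab)
      · exact a.2 (Set.mem_insert_of_mem _ hab.symm)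
      · exact hI.2 a ha b hb ((hadj a b).2 hab)
  calc indepDomNum G ≤ (insert t (Subtype.val '' I)).ncard := indepDomNum_le_ncard hJ
    _ ≤ (Subtype.val '' I).ncard + 1 := Set.ncard_insert_le _ _
    _ = _ := by rw [Set.ncard_image_of_injective _ Subtype.val_injective, hIcard]

end IndepDom

section Weight

variable {V : Type*} {G : SimpleGraph V}

lemma wtGraph_induce (S : Set V) :
    wtGraph ((⊤ : G.Subgraph).induce S).coe =
      ∑ᶠ z ∈ S, weightOfDeg (G.neighborSet z ∩ S).ncard := by
  have hdeg : ∀ w : ↥S, deg ((⊤ : G.Subgraph).induce S).coe w = (G.neighborSet w ∩ S).ncard := by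
    intro w
    have himg : Subtype.val '' (((⊤ : G.Subgraph).induce S).coe.neighborSet w) =
        G.neighborSet w ∩ S := by
      ext z
      constructor
      · rintro ⟨z, ⟨-, hz, hwz⟩, rfl⟩
        exact ⟨hwz, hz⟩
      · rintro ⟨hwz, hz⟩
        exact ⟨⟨z, hz⟩, ⟨w.2, hz, hwz⟩, rfl⟩
    unfold deg
    rw [← himg, Set.ncard_image_of_injective _ Subtype.val_injective]
  rw [wtGraph, wtSet, finsum_mem_univ, ← finsum_set_coe_eq_finsum_mem]
  exact finsum_congr fun w => by rw [wt_eq_weightOfDeg, hdeg w]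

variable [Finite V]

lemma ncard_neighborSet_inter_closedNbhd_le_one (hC4 : NoFourCycle G) {t z : V}
    (hz : z ∉ insert t (G.neighborSet t)) :
    (G.neighborSet z ∩ insert t (G.neighborSet t)).ncard ≤ 1 := by
  rw [Set.ncard_le_one (Set.toFinite _)]
  have hzt : z ≠ t := fun h => hz (Or.inl h)
  rintro a ⟨hza, rfl | hta⟩ b ⟨hzb, rfl | htb⟩
  · rfl
  · exact absurd (Or.inr hza.symm) hz
  · exact absurd (Or.inr hzb.symm) hz
  · by_contra hab
    exact hC4 ⟨z, a, t, b, hza.ne, hzt, hzb.ne, hta.ne', hab, htb.ne,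
      hza, hta.symm, htb, hzb.symm⟩

lemma weightOfDeg_ncard_sdiff_closedNbhd_le (hC4 : NoFourCycle G) {t z : V}
    (hz : z ∉ insert t (G.neighborSet t)) :
    weightOfDeg (G.neighborSet z \ insert t (G.neighborSet t)).ncard ≤
      wt G z + dropCost (deg G z) := by
  have hsplit := Set.ncard_inter_add_ncard_sdiff_eq_ncard (G.neighborSet z)
    (insert t (G.neighborSet t))
  have hle := ncard_neighborSet_inter_closedNbhd_le_one hC4 hz
  calc _ ≤ weightOfDeg (deg G z - 1) := weightOfDeg_antitone (by unfold deg; omega)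
    _ ≤ _ := weightOfDeg_sub_one_le _

end Weight

theorem MinimalCounterexample.sum_wt_closedNbhd_lt {V : Type*} [Fintype V] {G : SimpleGraph V}
    (hG : MinimalCounterexample G) (t : V) (X D : Finset V)
    (hX : ∀ w, w ∈ X ↔ w = t ∨ G.Adj t w) (hD : ∀ a ∈ X, ∀ z ∉ X, G.Adj a z → z ∈ D) :
    ∑ z ∈ X, wt G z < 14 + ∑ z ∈ D, dropCost (deg G z) := by
  classical
  obtain ⟨-, hC4, hlt, hmin⟩ := hG
  have hXset : insert t (G.neighborSet t) = (X : Set V) := by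
    ext w; simp [hX]
  set H := (⊤ : G.Subgraph).induce (X : Set V)ᶜ
  have hH : H ≠ ⊤ := fun h => by
    have : t ∈ H.verts := h ▸ Set.mem_univ t
    exact this (by simp [hX])
  have hi : indepDomNum G ≤ indepDomNum H.coe + 1 := by
    have := indepDomNum_le_induce_compl_add_one (G := G) t
    rwa [hXset] at this
  have hwG : wtGraph G = ∑ z ∈ X, wt G z + ∑ z ∈ Xᶜ, wt G z := by
    rw [Finset.sum_add_sum_compl, wtGraph, wtSet, finsum_mem_univ, finsum_eq_sum_of_fintype]
  have hvertex : ∀ z ∈ Xᶜ, weightOfDeg (G.neighborSet z ∩ (X : Set V)ᶜ).ncard ≤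
      wt G z + if z ∈ D then dropCost (deg G z) else 0 := by
    intro z hz
    have hzX : z ∉ X := Finset.mem_compl.1 hz
    rw [← Set.sdiff_eq, ← hXset]
    split_ifs with hzD
    · exact weightOfDeg_ncard_sdiff_closedNbhd_le hC4 (by rwa [hXset])
    · rw [sdiff_eq_left.2 (Set.disjoint_left.2 fun w hzw hwX =>
        hzD (hD w (by rwa [← Finset.mem_coe, ← hXset]) z hzX hzw.symm))]
      rfl
  have hwH : wtGraph H.coe ≤ ∑ z ∈ Xᶜ, wt G z + ∑ z ∈ D, dropCost (deg G z) := by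
    rw [wtGraph_induce, ← Finset.coe_compl, finsum_mem_coe_finset, Finset.coe_compl]
    calc _ ≤ ∑ z ∈ Xᶜ, (wt G z + if z ∈ D then dropCost (deg G z) else 0) :=
          Finset.sum_le_sum hvertex
      _ = ∑ z ∈ Xᶜ, wt G z + ∑ z ∈ Xᶜ ∩ D, dropCost (deg G z) := by
          rw [Finset.sum_add_distrib, Finset.sum_ite_mem]
      _ ≤ _ := Nat.add_le_add_left (Finset.sum_le_sum_of_subset Finset.inter_subset_right) _
  have := hmin H hH
  omega

namespace MinimalCounterexample

variable {V : Type*} [Fintype V] {G : SimpleGraph V}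

theorem deg_eq_three_and_exists_adj_leaf (hG : MinimalCounterexample G) {a l x : V}
    (ha : deg G a = 2) (hal : G.Adj a l) (hax : G.Adj a x) (hlx : l ≠ x) (hl : deg G l = 1) :
    deg G x = 3 ∧ ∃ z, G.Adj x z ∧ deg G z = 1 := by
  classical
  have hNa : ∀ w, G.Adj a w ↔ w = l ∨ w = x := fun w => adj_iff_of_deg_eq_two ha hal hax hlx
  have hNl : ∀ w, G.Adj l w ↔ w = a := fun w => adj_iff_of_deg_eq_one hl hal.symm
  set D := (G.neighborFinset x).erase a
  have key := hG.sum_wt_closedNbhd_lt a {a, l, x} D (by simp [hNa])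
    (by simp only [D, Finset.mem_insert, Finset.mem_singleton, Finset.mem_erase,
      mem_neighborFinset]; grind)
  rw [Finset.sum_insert (by simp [hal.ne, hax.ne]), Finset.sum_pair hlx] at key
  have hcard : D.card = deg G x - 1 := by
    rw [Finset.card_erase_of_mem (by simp [hax.symm]), deg_eq_card_neighborFinset]
  -- `w(N[a]) = 15 + wt x`, and the `deg x - 1` vertices of `D` gain at most 5 each, and at most
  -- 3 each if none of them is a leaf.
  have h5 := Finset.sum_le_card_nsmul D (fun z => dropCost (deg G z)) 5
    (fun z _ => dropCost_le_five _)
  have hx3 := hG.1 x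
  have hx0 := deg_pos_of_adj hax.symm
  simp only [wt_eq_weightOfDeg, ha, hl, smul_eq_mul, hcard] at key h5
  by_contra! h
  by_cases hx : deg G x = 3
  · have h3 := Finset.sum_le_card_nsmul D (fun z => dropCost (deg G z)) 3 fun z hz =>
      dropCost_le_three (h hx z (by simpa [D] using (Finset.mem_erase.1 hz).2))
    simp only [smul_eq_mul, hcard, hx] at key h3
    simp [weightOfDeg] at key
    omega
  · interval_cases hd : deg G x <;> simp [weightOfDeg] at key hx <;> omega

theorem false_of_adj_two_leaves (hG : MinimalCounterexample G) {b w₁ w₂ : V}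
    (hb : deg G b = 3) (hbw₁ : G.Adj b w₁) (hbw₂ : G.Adj b w₂) (hw : w₁ ≠ w₂)
    (hw₁ : deg G w₁ = 1) (hw₂ : deg G w₂ = 1) : False := by
  classical
  obtain ⟨c, hbc, hcw₁, hcw₂⟩ := exists_adj_ne_ne (show 2 < deg G b by omega) w₁ w₂
  have hNb : ∀ w, G.Adj b w ↔ w = c ∨ w = w₁ ∨ w = w₂ := fun w =>
    adj_iff_of_deg_eq_three hb hbc hbw₁ hbw₂ hcw₁ hcw₂ hw
  have hN₁ : ∀ w, G.Adj w₁ w ↔ w = b := fun w => adj_iff_of_deg_eq_one hw₁ hbw₁.symm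
  have hN₂ : ∀ w, G.Adj w₂ w ↔ w = b := fun w => adj_iff_of_deg_eq_one hw₂ hbw₂.symm
  set D := (G.neighborFinset c).erase b
  have key := hG.sum_wt_closedNbhd_lt b {b, c, w₁, w₂} D (by simp [hNb])
    (by simp only [D, Finset.mem_insert, Finset.mem_singleton, Finset.mem_erase,
      mem_neighborFinset]; grind)
  rw [Finset.sum_insert (by simp [hbc.ne, hbw₁.ne, hbw₂.ne]),
    Finset.sum_insert (by simp [hcw₁, hcw₂]), Finset.sum_pair hw] at key
  have hcard : D.card = deg G c - 1 := by
    rw [Finset.card_erase_of_mem (by simp [hbc.symm]), deg_eq_card_neighborFinset]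
  -- `w(N[b]) = 23 + wt c`, and the `deg c - 1` vertices of `D` gain at most 5 each.
  have h5 := Finset.sum_le_card_nsmul D (fun z => dropCost (deg G z)) 5
    (fun z _ => dropCost_le_five _)
  have hc3 := hG.1 c
  have hc0 := deg_pos_of_adj hbc.symm
  simp only [wt_eq_weightOfDeg, hb, hw₁, hw₂, smul_eq_mul, hcard] at key h5
  interval_cases hd : deg G c <;> simp [weightOfDeg] at key <;> omega

theorem exists_adj_deg_ne_two (hG : MinimalCounterexample G) {x : V} (hx : deg G x = 3) :
    ∃ w, G.Adj x w ∧ deg G w ≠ 2 := by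
  classical
  by_contra! h
  have hleaf : ∀ p z, G.Adj x p → G.Adj p z → z ≠ x → deg G z ≠ 1 := by
    intro p z hxp hpz hzx hz
    obtain ⟨-, w, hxw, hw⟩ := hG.deg_eq_three_and_exists_adj_leaf (h p hxp) hpz hxp.symm hzx hz
    have := h w hxw
    omega
  set D := (G.neighborFinset x).biUnion fun p => (G.neighborFinset p).erase x
  have key := hG.sum_wt_closedNbhd_lt x (insert x (G.neighborFinset x)) D (by simp) (by
    intro a ha z hz haz
    simp only [Finset.mem_insert, mem_neighborFinset, not_or] at ha hz
    simp only [D, Finset.mem_biUnion, Finset.mem_erase, mem_neighborFinset]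
    rcases ha with rfl | ha
    · exact absurd haz hz.2
    · exact ⟨a, ha, hz.1, haz⟩)
  have hwN : ∑ p ∈ G.neighborFinset x, wt G p = 18 := by
    rw [Finset.sum_congr rfl fun p hp => by
      rw [wt_eq_weightOfDeg, h p ((mem_neighborFinset ..).1 hp)], Finset.sum_const,
      ← deg_eq_card_neighborFinset, hx]
    rfl
  rw [Finset.sum_insert (by simp), hwN, wt_eq_weightOfDeg, hx] at key
  -- `w(N[x]) = 23`, against at most three vertices at distance two, none a leaf.
  have hcard : D.card ≤ 3 := by
    calc D.card ≤ ∑ p ∈ G.neighborFinset x, ((G.neighborFinset p).erase x).card :=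
          Finset.card_biUnion_le
      _ = ∑ p ∈ G.neighborFinset x, 1 := Finset.sum_congr rfl fun p hp => by
          have hxp := (mem_neighborFinset ..).1 hp
          rw [Finset.card_erase_of_mem (by simpa using hxp.symm), ← deg_eq_card_neighborFinset,
            h p hxp]
      _ = 3 := by rw [Finset.sum_const, smul_eq_mul, mul_one, ← deg_eq_card_neighborFinset, hx]
  have h3 := Finset.sum_le_card_nsmul D (fun z => dropCost (deg G z)) 3 fun z hz => by
    simp only [D, Finset.mem_biUnion, Finset.mem_erase, mem_neighborFinset] at hz
    obtain ⟨p, hxp, hzx, hpz⟩ := hz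
    exact dropCost_le_three (hleaf p z hxp hpz hzx)
  simp only [smul_eq_mul] at h3
  simp [weightOfDeg] at key
  omega

theorem deg_ne_two_of_deg_two_path (hG : MinimalCounterexample G) {x v u y : V}
    (hx : deg G x = 3) (hv : deg G v = 2) (hu : deg G u = 2) (hvx : G.Adj v x)
    (hvu : G.Adj v u) (huy : G.Adj u y) (hxu : x ≠ u) (hvy : v ≠ y) : deg G y ≠ 2 := by
  classical
  intro hy
  obtain ⟨z, hyz, hzu⟩ := exists_adj_ne (show 1 < deg G y by omega) u
  have hz : deg G z ≠ 1 := fun hz => by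
    have := (hG.deg_eq_three_and_exists_adj_leaf hy hyz huy.symm hzu hz).1
    omega
  have hNv : ∀ w, G.Adj v w ↔ w = x ∨ w = u := fun w => adj_iff_of_deg_eq_two hv hvx hvu hxu
  have hNu : ∀ w, G.Adj u w ↔ w = v ∨ w = y := fun w =>
    adj_iff_of_deg_eq_two hu hvu.symm huy hvy
  have hNy : ∀ w, G.Adj y w ↔ w = z ∨ w = u := fun w =>
    adj_iff_of_deg_eq_two hy hyz huy.symm hzu
  have key := hG.sum_wt_closedNbhd_lt u {u, v, y} {x, z} (by simp [hNu])
    (by simp only [Finset.mem_insert, Finset.mem_singleton]; grind)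
  rw [Finset.sum_insert (by simp [hvu.ne', huy.ne]), Finset.sum_pair hvy] at key
  -- `w(N[u]) = 18 = 14 + dropCost 3 + 3`.
  have hD := Finset.sum_insert_le (fun z => dropCost (deg G z)) x {z}
  simp only [wt_eq_weightOfDeg, hu, hv, hy, Finset.sum_singleton, hx] at key hD
  have := dropCost_le_three hz
  simp [weightOfDeg] at key
  have : dropCost 3 = 1 := rfl
  omega

theorem false_of_adj_leaf_and_deg_two_path (hG : MinimalCounterexample G) {x v u a b : V}
    (hx : deg G x = 3) (hxv : G.Adj x v) (hxa : G.Adj x a) (hxb : G.Adj x b) (hva : v ≠ a)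
    (hvb : v ≠ b) (hab : a ≠ b) (hv : deg G v = 2) (hvu : G.Adj v u) (hux : u ≠ x)
    (hu : deg G u ≠ 1) (ha : deg G a = 1) (hb : deg G b = 3) : False := by
  classical
  obtain ⟨w₁, w₂, hbw₁, hbw₂, hxw₁, hxw₂, hw⟩ := exists_adj_ne_ne_of_deg_eq_three hb x
  have hNx : ∀ w, G.Adj x w ↔ w = v ∨ w = a ∨ w = b := fun w =>
    adj_iff_of_deg_eq_three hx hxv hxa hxb hva hvb hab
  have hNv : ∀ w, G.Adj v w ↔ w = x ∨ w = u := fun w =>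
    adj_iff_of_deg_eq_two hv hxv.symm hvu hux.symm
  have hNa : ∀ w, G.Adj a w ↔ w = x := fun w => adj_iff_of_deg_eq_one ha hxa.symm
  have hNb : ∀ w, G.Adj b w ↔ w = x ∨ w = w₁ ∨ w = w₂ := fun w =>
    adj_iff_of_deg_eq_three hb hxb.symm hbw₁ hbw₂ hxw₁.symm hxw₂.symm hw
  have key := hG.sum_wt_closedNbhd_lt x {x, v, a, b} {u, w₁, w₂} (by simp [hNx])
    (by simp only [Finset.mem_insert, Finset.mem_singleton]; grind)
  rw [Finset.sum_insert (by simp [hxv.ne, hxa.ne, hxb.ne]), Finset.sum_insert (by simp [hva, hvb]),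
    Finset.sum_pair hab] at key
  -- `w(N[x]) = 25 = 14 + 3 + 8`, and `w₁, w₂` gain at most 8 as they are not both leaves.
  have hD := (Finset.sum_insert_le (fun z => dropCost (deg G z)) u {w₁, w₂}).trans_eq
    (congrArg _ (Finset.sum_pair hw))
  have hleaves := hG.false_of_adj_two_leaves hb hbw₁ hbw₂ hw
  have := dropCost_le_three hu
  simp only [wt_eq_weightOfDeg, hx, hv, ha, hb] at key
  simp [weightOfDeg] at key
  by_cases h₁ : deg G w₁ = 1
  · have := dropCost_le_three fun h₂ => hleaves h₁ h₂
    have := dropCost_le_five (deg G w₁)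
    omega
  · have := dropCost_le_three h₁
    have := dropCost_le_five (deg G w₂)
    omega

theorem false_of_deg_two_edge_of_deg_three (hG : MinimalCounterexample G) {v u x y p q : V}
    (hv : deg G v = 2) (hu : deg G u = 2) (hvu : G.Adj v u) (hvx : G.Adj v x) (hux : u ≠ x)
    (huy : G.Adj u y) (hvy : v ≠ y) (hx : deg G x = 3) (hxp : G.Adj x p) (hxq : G.Adj x q)
    (hvp : v ≠ p) (hvq : v ≠ q) (hpq : p ≠ q) (hy : deg G y = 3) (hp : deg G p = 3)
    (hq : deg G q = 3) : False := by
  classical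
  have hNv : ∀ w, G.Adj v w ↔ w = u ∨ w = x := fun w => adj_iff_of_deg_eq_two hv hvu hvx hux
  have hNu : ∀ w, G.Adj u w ↔ w = v ∨ w = y := fun w =>
    adj_iff_of_deg_eq_two hu hvu.symm huy hvy
  have hNx : ∀ w, G.Adj x w ↔ w = v ∨ w = p ∨ w = q := fun w =>
    adj_iff_of_deg_eq_three hx hvx.symm hxp hxq hvp hvq hpq
  have key := hG.sum_wt_closedNbhd_lt v {v, u, x} {y, p, q} (by simp [hNv])
    (by simp only [Finset.mem_insert, Finset.mem_singleton]; grind)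
  rw [Finset.sum_insert (by simp [hvu.ne, hvx.ne]), Finset.sum_pair hux] at key
  -- `w(N[v]) = 17 = 14 + 3 · dropCost 3`.
  have hD := Finset.sum_le_card_nsmul {y, p, q} (fun z => dropCost (deg G z)) 1 (by
    simp only [Finset.mem_insert, Finset.mem_singleton]
    rintro z (rfl | rfl | rfl) <;> simp [hy, hp, hq, dropCost])
  have := Finset.card_le_three (a := y) (b := p) (c := q)
  simp only [wt_eq_weightOfDeg, hv, hu, hx, smul_eq_mul, mul_one] at key hD
  simp [weightOfDeg] at key
  omega

section DegTwoEdge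

variable (hG : MinimalCounterexample G) {v u x y : V} (hv : deg G v = 2) (hu : deg G u = 2)
  (hvu : G.Adj v u) (hvx : G.Adj v x) (hux : u ≠ x) (huy : G.Adj u y) (hvy : v ≠ y)
  (hx : deg G x = 3) (hy : deg G y = 3)
include hG hv hu hvu hvx hux huy hvy hx hy

theorem deg_eq_two_or_deg_eq_two {p q : V} (hxp : G.Adj x p) (hxq : G.Adj x q) (hvp : v ≠ p)
    (hvq : v ≠ q) (hpq : p ≠ q) : deg G p = 2 ∨ deg G q = 2 := by
  by_contra! h
  have hp : deg G p = 1 ∨ deg G p = 3 := by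
    have := hG.1 p; have := deg_pos_of_adj hxp.symm; omega
  have hq : deg G q = 1 ∨ deg G q = 3 := by
    have := hG.1 q; have := deg_pos_of_adj hxq.symm; omega
  have hu1 : deg G u ≠ 1 := by omega
  rcases hp with hp | hp <;> rcases hq with hq | hq
  · exact hG.false_of_adj_two_leaves hx hxp hxq hpq hp hq
  · exact hG.false_of_adj_leaf_and_deg_two_path hx hvx.symm hxp hxq hvp hvq hpq hv hvu hux hu1
      hp hq
  · exact hG.false_of_adj_leaf_and_deg_two_path hx hvx.symm hxq hxp hvq hvp hpq.symm hv hvu hux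
      hu1 hq hp
  · exact hG.false_of_deg_two_edge_of_deg_three hv hu hvu hvx hux huy hvy hx hxp hxq hvp hvq hpq
      hy hp hq

theorem mem_Aset_two_and_exists_adj_deg_eq_two :
    x ∈ Aset G 2 ∧ ∃ c, G.Adj x c ∧ c ≠ v ∧ deg G c = 2 := by
  obtain ⟨p, q, hxp, hxq, hpv, hqv, hpq⟩ := exists_adj_ne_ne_of_deg_eq_three hx v
  have hpq2 := deg_eq_two_or_deg_eq_two hG hv hu hvu hvx hux huy hvy hx hy hxp hxq hpv.symm
    hqv.symm hpq
  obtain ⟨w, hxw, hw⟩ := hG.exists_adj_deg_ne_two hx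
  rcases (adj_iff_of_deg_eq_three hx hvx.symm hxp hxq hpv.symm hqv.symm hpq).1 hxw
    with rfl | rfl | rfl
  · exact absurd hv hw
  · exact ⟨mem_Aset_two hx hvx.symm hxq hxw hqv.symm hpv.symm hpq.symm hv
      (hpq2.resolve_left hw) hw, q, hxq, hqv, hpq2.resolve_left hw⟩
  · exact ⟨mem_Aset_two hx hvx.symm hxp hxw hpv.symm hqv.symm hpq hv
      (hpq2.resolve_right hw) hw, p, hxp, hpv, hpq2.resolve_right hw⟩

end DegTwoEdge

end MinimalCounterexample

/-- In a minimal counterexample, every `B₁`-vertex `v` has a 2-step neighbor of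
degree 2; in particular, `v` has a `B₁`-neighbor and an `A₂`-neighbor. -/
theorem B1_vertex_structure {V : Type*} [Fintype V] (G : SimpleGraph V)
    (hG : MinimalCounterexample G) (v : V) (hv : v ∈ Bset G 1) :
    (∃ w, TwoStep G v w ∧ deg G w = 2) ∧
      (∃ u, G.Adj v u ∧ u ∈ Bset G 1) ∧ (∃ u, G.Adj v u ∧ u ∈ Aset G 2) := by
  obtain ⟨u, x, hvu, hvx, hux, hu, hx2⟩ := exists_of_mem_Bset_one hv
  have hv2 : deg G v = 2 := hv.1
  obtain ⟨y, huy, hyv⟩ := exists_adj_ne (show 1 < deg G u by omega) v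
  have hx : deg G x = 3 := by
    have := (hG.deg_eq_three_and_exists_adj_leaf hv2 hvx hvu hux.symm · |>.1)
    have := hG.1 x
    have := deg_pos_of_adj hvx.symm
    omega
  have hy : deg G y = 3 := by
    have := (hG.deg_eq_three_and_exists_adj_leaf hu huy hvu.symm hyv · |>.1)
    have := hG.deg_ne_two_of_deg_two_path hx hv2 hu hvx hvu huy hux.symm hyv.symm
    have := hG.1 y
    have := deg_pos_of_adj huy.symm
    omega
  obtain ⟨hxA, c, hxc, hcv, hc⟩ :=
    hG.mem_Aset_two_and_exists_adj_deg_eq_two hv2 hu hvu hvx hux huy hyv.symm hx hy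
  exact ⟨⟨c, ⟨hcv, x, hvx, hxc⟩, hc⟩,
    ⟨u, hvu, mem_Bset_one hu hvu.symm huy hyv.symm hv2 (by omega)⟩, ⟨x, hvx, hxA⟩⟩
end

section
/- For nonnegative integers k and ℓ with k + ℓ ≥ 5, the graph T_{k,ℓ} (as defined in the context) satisfies: n₀(T_{k,ℓ}) = 0, n₁(T_{k,ℓ}) = k, n₂(T_{k,ℓ}) = 3ℓ, n₃(T_{k,ℓ}) = k + 2ℓ, and i(T_{k,ℓ}) = k + 2ℓ; consequently 14·i(T_{k,ℓ}) = 14·n₀(T_{k,ℓ}) + 9·n₁(T_{k,ℓ}) + 6·n₂(T_{k,ℓ}) + 5·n₃(T_{k,ℓ}), so equality holds in the bound 14·i(G) ≤ 14n₀(G)+9n₁(G)+6n₂(G)+5n₃(G) for subcubic graphs without 4-cycles. -/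
open Set

/-- The graph `T_{k,ℓ}`: obtained from a cycle `x₁…x_{k+4ℓ}x₁` (here the cycle
vertices are `Sum.inl i` for `i : ZMod (k+4ℓ)`, with `Sum.inl i` corresponding to
`x_{i+1}`) by adding a pendant vertex `Sum.inr (Sum.inl j)` adjacent to `x_{j+1}`
for each `j ∈ {0,…,k-1}`, and a vertex `Sum.inr (Sum.inr j)` adjacent to
`x_{k+4j+1}` and `x_{k+4j+4}` for each `j ∈ {0,…,ℓ-1}`. -/
def Tgraph (k l : ℕ) : SimpleGraph (ZMod (k + 4 * l) ⊕ (Fin k ⊕ Fin l)) :=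
  SimpleGraph.fromRel (fun a b =>
    match a, b with
    | Sum.inl i, Sum.inl j => j = i + 1
    | Sum.inl i, Sum.inr (Sum.inl j) => i = ((j : ℕ) : ZMod (k + 4 * l))
    | Sum.inl i, Sum.inr (Sum.inr j) =>
        i = ((k + 4 * (j : ℕ) : ℕ) : ZMod (k + 4 * l)) ∨
        i = ((k + 4 * (j : ℕ) + 3 : ℕ) : ZMod (k + 4 * l))
    | _, _ => False)

namespace TAux
open Sum

variable {k l : ℕ}

lemma castEq (hn : 5 ≤ k + 4 * l) {a b : ℕ} (ha : a < k + 4 * l) (hb : b < k + 4 * l) :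
    ((a : ZMod (k + 4 * l)) = (b : ZMod (k + 4 * l))) ↔ a = b := by
  constructor
  · intro hcast
    have := congrArg ZMod.val hcast
    rwa [ZMod.val_natCast_of_lt ha, ZMod.val_natCast_of_lt hb] at this
  · rintro rfl; rfl

lemma eqCast (hn : 5 ≤ k + 4 * l) {i : ZMod (k + 4 * l)} {a : ℕ} (ha : a < k + 4 * l) :
    i = (a : ZMod (k + 4 * l)) ↔ i.val = a := by
  haveI : NeZero (k + 4 * l) := ⟨by omega⟩
  constructor
  · rintro rfl; exact ZMod.val_natCast_of_lt ha
  · intro h; rw [← ZMod.natCast_zmod_val i, h]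

lemma eqCastMod (hn : 5 ≤ k + 4 * l) {b c : ℕ} (hb : b < k + 4 * l) :
    ((c : ZMod (k + 4 * l)) = (b : ZMod (k + 4 * l))) ↔ c % (k + 4 * l) = b := by
  constructor
  · intro hcast
    have := congrArg ZMod.val hcast
    rwa [ZMod.val_natCast, ZMod.val_natCast_of_lt hb] at this
  · intro h
    have : ((c % (k + 4 * l) : ℕ) : ZMod (k + 4 * l)) = ((c : ℕ) : ZMod (k + 4 * l)) :=
      ZMod.natCast_mod c (k + 4 * l) ▸ rfl
    rw [← this, h]

lemma val_lt' (hn : 5 ≤ k + 4 * l) (i : ZMod (k + 4 * l)) : i.val < k + 4 * l := by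
  haveI : NeZero (k + 4 * l) := ⟨by omega⟩
  exact ZMod.val_lt i

lemma cast_add_one (k l a : ℕ) :
    ((a : ZMod (k + 4 * l)) + 1) = ((a + 1 : ℕ) : ZMod (k + 4 * l)) := by push_cast; ring

lemma cast_sub_one (k l a : ℕ) :
    ((a + 1 : ℕ) : ZMod (k + 4 * l)) - 1 = ((a : ℕ) : ZMod (k + 4 * l)) := by push_cast; ring

lemma one_ne_zero' (hn : 5 ≤ k + 4 * l) : (1 : ZMod (k + 4 * l)) ≠ 0 := by
  intro h
  have h2 : ((1 : ℕ) : ZMod (k + 4 * l)) = 0 := by exact_mod_cast h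
  have := (ZMod.natCast_eq_zero_iff 1 (k + 4 * l)).mp h2
  have := Nat.le_of_dvd one_pos this
  omega

lemma two_ne_zero' (hn : 5 ≤ k + 4 * l) : (2 : ZMod (k + 4 * l)) ≠ 0 := by
  intro h
  have h2 : ((2 : ℕ) : ZMod (k + 4 * l)) = 0 := by exact_mod_cast h
  have := (ZMod.natCast_eq_zero_iff 2 (k + 4 * l)).mp h2
  have := Nat.le_of_dvd two_pos this
  omega

/-- cycle-cycle adjacency -/
lemma adj_ll (hn : 5 ≤ k + 4 * l) {i j : ZMod (k + 4 * l)} :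
    (Tgraph k l).Adj (Sum.inl i) (Sum.inl j) ↔ j = i + 1 ∨ j = i - 1 := by
  have base : (Tgraph k l).Adj (Sum.inl i) (Sum.inl j) ↔ i ≠ j ∧ (j = i + 1 ∨ i = j + 1) := by
    simp [Tgraph, SimpleGraph.fromRel_adj]
  rw [base]
  constructor
  · rintro ⟨hne, h | h⟩
    · exact Or.inl h
    · exact Or.inr (eq_sub_of_add_eq h.symm)
  · rintro (rfl | rfl)
    · refine ⟨?_, Or.inl rfl⟩
      intro hx
      exact one_ne_zero' hn (by linear_combination -hx)
    · refine ⟨?_, Or.inr (sub_add_cancel i 1).symm⟩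
      intro hx
      exact one_ne_zero' hn (by linear_combination hx)

lemma adj_ll_val (hn : 5 ≤ k + 4 * l) {a b : ℕ} (ha : a < k + 4 * l) (hb : b < k + 4 * l) :
    (Tgraph k l).Adj (Sum.inl (a : ZMod (k + 4 * l))) (Sum.inl (b : ZMod (k + 4 * l))) ↔
      (b = (a + 1) % (k + 4 * l) ∨ a = (b + 1) % (k + 4 * l)) := by
  rw [adj_ll hn, cast_add_one]
  have h2 : ((a : ZMod (k + 4 * l)) - 1 = (b : ZMod (k + 4 * l))) ↔
      ((a : ZMod (k + 4 * l)) = ((b + 1 : ℕ) : ZMod (k + 4 * l))) := by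
    rw [sub_eq_iff_eq_add]; push_cast; ring_nf
  constructor
  · rintro (h | h)
    · exact Or.inl ((eqCastMod hn hb).mp h.symm).symm
    · exact Or.inr ((eqCastMod hn ha).mp (h2.mp h.symm).symm).symm
  · rintro (h | h)
    · exact Or.inl ((eqCastMod hn hb).mpr h.symm).symm
    · exact Or.inr (h2.mpr ((eqCastMod hn ha).mpr h.symm).symm).symm

lemma adj_lp (hn : 5 ≤ k + 4 * l) {i : ZMod (k + 4 * l)} {j : Fin k} :
    (Tgraph k l).Adj (Sum.inl i) (Sum.inr (Sum.inl j)) ↔ i.val = (j : ℕ) := by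
  have base : (Tgraph k l).Adj (Sum.inl i) (Sum.inr (Sum.inl j)) ↔
      i = ((j : ℕ) : ZMod (k + 4 * l)) := by
    simp [Tgraph, SimpleGraph.fromRel_adj]
  rw [base, eqCast hn (by omega)]

lemma adj_lc (hn : 5 ≤ k + 4 * l) {i : ZMod (k + 4 * l)} {j : Fin l} :
    (Tgraph k l).Adj (Sum.inl i) (Sum.inr (Sum.inr j)) ↔
      i.val = k + 4 * (j : ℕ) ∨ i.val = k + 4 * (j : ℕ) + 3 := by
  have hj := j.isLt
  have base : (Tgraph k l).Adj (Sum.inl i) (Sum.inr (Sum.inr j)) ↔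
      (i = ((k + 4 * (j:ℕ) : ℕ) : ZMod (k + 4 * l)) ∨
       i = ((k + 4 * (j:ℕ) + 3 : ℕ) : ZMod (k + 4 * l))) := by
    simp [Tgraph, SimpleGraph.fromRel_adj]
  rw [base, eqCast hn (by omega), eqCast hn (by omega)]

lemma not_adj_rr {a b : Fin k ⊕ Fin l} : ¬ (Tgraph k l).Adj (Sum.inr a) (Sum.inr b) := by
  cases a <;> cases b <;> simp [Tgraph, SimpleGraph.fromRel_adj]

end TAux
namespace TAux
variable {k l : ℕ}

lemma deg_pend (hn : 5 ≤ k + 4 * l) (j : Fin k) :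
    deg (Tgraph k l) (Sum.inr (Sum.inl j)) = 1 := by
  have hNS : (Tgraph k l).neighborSet (Sum.inr (Sum.inl j)) =
      {Sum.inl (((j : ℕ) : ZMod (k + 4 * l)))} := by
    ext v
    cases v with
    | inl i =>
      simp only [SimpleGraph.mem_neighborSet, mem_singleton_iff, Sum.inl.injEq]
      rw [(Tgraph k l).adj_comm, adj_lp hn, eqCast hn (by omega)]
    | inr a =>
      simp only [SimpleGraph.mem_neighborSet, mem_singleton_iff]
      constructor
      · intro h; exact absurd h not_adj_rr
      · intro h; cases h
  rw [deg, hNS, ncard_singleton]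

lemma deg_chord (hn : 5 ≤ k + 4 * l) (j : Fin l) :
    deg (Tgraph k l) (Sum.inr (Sum.inr j)) = 2 := by
  have hj := j.isLt
  have hNS : (Tgraph k l).neighborSet (Sum.inr (Sum.inr j)) =
      {Sum.inl (((k + 4 * (j : ℕ) : ℕ) : ZMod (k + 4 * l))),
       Sum.inl (((k + 4 * (j : ℕ) + 3 : ℕ) : ZMod (k + 4 * l)))} := by
    ext v
    cases v with
    | inl i =>
      simp only [SimpleGraph.mem_neighborSet, mem_insert_iff, mem_singleton_iff, Sum.inl.injEq]
      rw [(Tgraph k l).adj_comm, adj_lc hn, eqCast hn (by omega), eqCast hn (by omega)]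
    | inr a =>
      simp only [SimpleGraph.mem_neighborSet, mem_insert_iff, mem_singleton_iff]
      constructor
      · intro h; exact absurd h not_adj_rr
      · rintro (h | h) <;> cases h
  rw [deg, hNS, ncard_pair]
  intro hx
  rw [Sum.inl.injEq, castEq hn (by omega) (by omega)] at hx
  omega

lemma nbhd_inl_pend (hn : 5 ≤ k + 4 * l) (i : ZMod (k + 4 * l)) (hik : i.val < k) :
    (Tgraph k l).neighborSet (Sum.inl i) =
      {Sum.inl (i + 1), Sum.inl (i - 1), Sum.inr (Sum.inl ⟨i.val, hik⟩)} := by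
  ext v
  cases v with
  | inl i' =>
    simp only [SimpleGraph.mem_neighborSet, mem_insert_iff, mem_singleton_iff, Sum.inl.injEq,
      reduceCtorEq, or_false]
    rw [adj_ll hn]
  | inr a =>
    cases a with
    | inl j =>
      simp only [SimpleGraph.mem_neighborSet, mem_insert_iff, mem_singleton_iff,
        reduceCtorEq, false_or, Sum.inr.injEq, Sum.inl.injEq]
      rw [adj_lp hn, Fin.ext_iff]
      simp [eq_comm]
    | inr j =>
      have hj := j.isLt
      simp only [SimpleGraph.mem_neighborSet, mem_insert_iff, mem_singleton_iff, reduceCtorEq,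
        or_false, false_or]
      rw [adj_lc hn]
      constructor
      · intro h; omega
      · intro h; cases h
  done

lemma nbhd_inl_chord (hn : 5 ≤ k + 4 * l) (i : ZMod (k + 4 * l)) (q : Fin l)
    (hik : i.val = k + 4 * (q : ℕ) ∨ i.val = k + 4 * (q : ℕ) + 3) :
    (Tgraph k l).neighborSet (Sum.inl i) =
      {Sum.inl (i + 1), Sum.inl (i - 1), Sum.inr (Sum.inr q)} := by
  have hq := q.isLt
  ext v
  cases v with
  | inl i' =>
    simp only [SimpleGraph.mem_neighborSet, mem_insert_iff, mem_singleton_iff, Sum.inl.injEq,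
      reduceCtorEq, or_false]
    rw [adj_ll hn]
  | inr a =>
    cases a with
    | inl j =>
      have hj := j.isLt
      simp only [SimpleGraph.mem_neighborSet, mem_insert_iff, mem_singleton_iff,
        reduceCtorEq, or_false, false_or]
      rw [adj_lp hn]
      constructor
      · intro h; omega
      · intro h; cases h
    | inr j =>
      have hj := j.isLt
      simp only [SimpleGraph.mem_neighborSet, mem_insert_iff, mem_singleton_iff, reduceCtorEq,
        false_or, Sum.inr.injEq]
      rw [adj_lc hn, Fin.ext_iff]
      omega

lemma nbhd_inl_mid (hn : 5 ≤ k + 4 * l) (i : ZMod (k + 4 * l)) (hik : k ≤ i.val)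
    (h4 : (i.val - k) % 4 = 1 ∨ (i.val - k) % 4 = 2) :
    (Tgraph k l).neighborSet (Sum.inl i) = {Sum.inl (i + 1), Sum.inl (i - 1)} := by
  ext v
  cases v with
  | inl i' =>
    simp only [SimpleGraph.mem_neighborSet, mem_insert_iff, mem_singleton_iff, Sum.inl.injEq]
    rw [adj_ll hn]
  | inr a =>
    cases a with
    | inl j =>
      have hj := j.isLt
      simp only [SimpleGraph.mem_neighborSet, mem_insert_iff, mem_singleton_iff, reduceCtorEq,
        or_self]
      rw [adj_lp hn]
      simp only [iff_false]
      intro h; omega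
    | inr j =>
      have hj := j.isLt
      simp only [SimpleGraph.mem_neighborSet, mem_insert_iff, mem_singleton_iff, reduceCtorEq,
        or_self]
      rw [adj_lc hn]
      simp only [iff_false]
      intro h; omega

lemma ncard_triple {α : Type*} [Finite α] {a b : α} (c : α) (hab : a ≠ b)
    (hac : a ≠ c) (hbc : b ≠ c) : ({a, b, c} : Set α).ncard = 3 := by
  rw [Set.ncard_insert_of_notMem (by simp [hab, hac]) (Set.toFinite _),
    Set.ncard_pair hbc]

lemma succ_ne_pred (hn : 5 ≤ k + 4 * l) (i : ZMod (k + 4 * l)) : i + 1 ≠ i - 1 := by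
  intro h
  exact two_ne_zero' hn (by linear_combination h)

lemma deg_inl (hn : 5 ≤ k + 4 * l) (i : ZMod (k + 4 * l)) :
    deg (Tgraph k l) (Sum.inl i) =
      if (i.val - k) % 4 = 0 ∨ (i.val - k) % 4 = 3 then 3 else 2 := by
  haveI : NeZero (k + 4 * l) := ⟨by omega⟩
  have hvl := val_lt' hn i
  rcases Classical.em ((i.val - k) % 4 = 0 ∨ (i.val - k) % 4 = 3) with h | h
  · rw [if_pos h]
    by_cases hik : i.val < k
    · rw [deg, nbhd_inl_pend hn i hik]
      exact ncard_triple _ (by simp [succ_ne_pred hn i]) (by simp) (by simp)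
    · have h4 : i.val - k < 4 * l := by omega
      have hq : (i.val - k) / 4 < l := by omega
      rw [deg, nbhd_inl_chord hn i ⟨(i.val - k) / 4, hq⟩ (by simp; omega)]
      exact ncard_triple _ (by simp [succ_ne_pred hn i]) (by simp) (by simp)
  · rw [if_neg h]
    have hik : k ≤ i.val := by
      by_contra hc
      exact h (Or.inl (by omega))
    rw [deg, nbhd_inl_mid hn i hik (by omega)]
    exact Set.ncard_pair (by simp [succ_ne_pred hn i])

end TAux
/-- auxiliary functions enumerating the degree-2, degree-3 vertices and the
independent dominating set. -/
def F2aux (k l : ℕ) : Fin l ⊕ (Fin l ⊕ Fin l) → (ZMod (k + 4 * l) ⊕ (Fin k ⊕ Fin l))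
  | .inl q => .inr (.inr q)
  | .inr (.inl q) => .inl ((k + 4 * (q : ℕ) + 1 : ℕ) : ZMod (k + 4 * l))
  | .inr (.inr q) => .inl ((k + 4 * (q : ℕ) + 2 : ℕ) : ZMod (k + 4 * l))

def F3aux (k l : ℕ) : Fin k ⊕ (Fin l ⊕ Fin l) → (ZMod (k + 4 * l) ⊕ (Fin k ⊕ Fin l))
  | .inl j => .inl (((j : ℕ) : ℕ) : ZMod (k + 4 * l))
  | .inr (.inl q) => .inl ((k + 4 * (q : ℕ) : ℕ) : ZMod (k + 4 * l))
  | .inr (.inr q) => .inl ((k + 4 * (q : ℕ) + 3 : ℕ) : ZMod (k + 4 * l))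

def FSaux (k l : ℕ) : Fin k ⊕ (Fin l ⊕ Fin l) → (ZMod (k + 4 * l) ⊕ (Fin k ⊕ Fin l))
  | .inl j => .inr (.inl j)
  | .inr (.inl q) => .inr (.inr q)
  | .inr (.inr q) => .inl ((k + 4 * (q : ℕ) + 1 : ℕ) : ZMod (k + 4 * l))

namespace TAux
variable {k l : ℕ}

lemma ncard_range_inj {α β : Type*} [Fintype α] (f : α → β) (hf : Function.Injective f) :
    (Set.range f).ncard = Fintype.card α := by
  rw [← Set.image_univ, Set.ncard_image_of_injective _ hf, Set.ncard_univ,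
    Nat.card_eq_fintype_card]

lemma nk0 (hn : 5 ≤ k + 4 * l) : nk (Tgraph k l) 0 = 0 := by
  have hset : {v | deg (Tgraph k l) v = 0} = (∅ : Set _) := by
    ext v
    simp only [mem_setOf_eq, mem_empty_iff_false, iff_false]
    match v with
    | Sum.inl i => rw [deg_inl hn i]; split <;> omega
    | Sum.inr (Sum.inl j) => rw [deg_pend hn j]; omega
    | Sum.inr (Sum.inr j) => rw [deg_chord hn j]; omega
  rw [nk, hset, Set.ncard_empty]

lemma nk1 (hn : 5 ≤ k + 4 * l) : nk (Tgraph k l) 1 = k := by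
  have hset : {v | deg (Tgraph k l) v = 1} =
      Set.range (fun j : Fin k => (Sum.inr (Sum.inl j) : ZMod (k + 4 * l) ⊕ (Fin k ⊕ Fin l))) := by
    ext v
    simp only [mem_setOf_eq, Set.mem_range]
    match v with
    | Sum.inl i =>
      rw [deg_inl hn i]
      constructor
      · intro hd; split at hd <;> omega
      · rintro ⟨j, hj⟩; cases hj
    | Sum.inr (Sum.inl j) =>
      rw [deg_pend hn j]
      simp
    | Sum.inr (Sum.inr j) =>
      rw [deg_chord hn j]
      constructor
      · omega
      · rintro ⟨j', hj'⟩; cases hj'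
  rw [nk, hset, ncard_range_inj _ (fun a b h => by simpa using h), Fintype.card_fin]

lemma nk2 (hn : 5 ≤ k + 4 * l) : nk (Tgraph k l) 2 = 3 * l := by
  haveI : NeZero (k + 4 * l) := ⟨by omega⟩
  have hset : {v | deg (Tgraph k l) v = 2} = Set.range (F2aux k l) := by
    ext v
    simp only [mem_setOf_eq, Set.mem_range]
    match v with
    | Sum.inl i =>
      have hvl := val_lt' hn i
      rw [deg_inl hn i]
      constructor
      · intro hd
        have h4 : ¬ ((i.val - k) % 4 = 0 ∨ (i.val - k) % 4 = 3) := by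
          intro hc; rw [if_pos hc] at hd; omega
        have hik : k ≤ i.val := by
          rcases Nat.lt_or_ge i.val k with hlt | hge
          · exact absurd (Or.inl (by omega)) h4
          · exact hge
        have ht : i.val - k < 4 * l := by omega
        rcases Classical.em ((i.val - k) % 4 = 1) with h1 | h1
        · refine ⟨Sum.inr (Sum.inl ⟨(i.val - k) / 4, by omega⟩), ?_⟩
          show Sum.inl (((k + 4 * ((i.val - k) / 4) + 1 : ℕ) : ZMod (k + 4 * l)) :
            ZMod (k + 4 * l)) = Sum.inl i
          rw [Sum.inl.injEq, eq_comm, eqCast hn (by omega)]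
          omega
        · refine ⟨Sum.inr (Sum.inr ⟨(i.val - k) / 4, by omega⟩), ?_⟩
          show Sum.inl (((k + 4 * ((i.val - k) / 4) + 2 : ℕ) : ZMod (k + 4 * l)) :
            ZMod (k + 4 * l)) = Sum.inl i
          rw [Sum.inl.injEq, eq_comm, eqCast hn (by omega)]
          omega
      · rintro ⟨x, hx⟩
        match x with
        | Sum.inl q => cases hx
        | Sum.inr (Sum.inl q) =>
          have hq := q.isLt
          rw [show F2aux k l (Sum.inr (Sum.inl q)) =
            Sum.inl ((k + 4 * (q : ℕ) + 1 : ℕ) : ZMod (k + 4 * l)) from rfl,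
            Sum.inl.injEq] at hx
          have : i.val = k + 4 * (q : ℕ) + 1 := by
            rw [← hx, ZMod.val_natCast_of_lt (by omega)]
          rw [if_neg (by omega)]
        | Sum.inr (Sum.inr q) =>
          have hq := q.isLt
          rw [show F2aux k l (Sum.inr (Sum.inr q)) =
            Sum.inl ((k + 4 * (q : ℕ) + 2 : ℕ) : ZMod (k + 4 * l)) from rfl,
            Sum.inl.injEq] at hx
          have : i.val = k + 4 * (q : ℕ) + 2 := by
            rw [← hx, ZMod.val_natCast_of_lt (by omega)]
          rw [if_neg (by omega)]
    | Sum.inr (Sum.inl j) =>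
      rw [deg_pend hn j]
      constructor
      · omega
      · rintro ⟨x, hx⟩
        match x with
        | Sum.inl q => cases hx
        | Sum.inr (Sum.inl q) => cases hx
        | Sum.inr (Sum.inr q) => cases hx
    | Sum.inr (Sum.inr j) =>
      rw [deg_chord hn j]
      simp only [true_iff]
      exact ⟨Sum.inl j, rfl⟩
  rw [nk, hset, ncard_range_inj]
  · simp only [Fintype.card_sum, Fintype.card_fin]; ring
  · intro x y hxy
    match x, y with
    | Sum.inl q, Sum.inl q' =>
      have h' : (Sum.inr (Sum.inr q) : ZMod (k + 4 * l) ⊕ (Fin k ⊕ Fin l)) =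
          Sum.inr (Sum.inr q') := hxy
      simpa using h'
    | Sum.inl q, Sum.inr (Sum.inl q') => cases hxy
    | Sum.inl q, Sum.inr (Sum.inr q') => cases hxy
    | Sum.inr (Sum.inl q'), Sum.inl q => cases hxy
    | Sum.inr (Sum.inr q'), Sum.inl q => cases hxy
    | Sum.inr (Sum.inl q), Sum.inr (Sum.inl q') =>
      have hq := q.isLt; have hq' := q'.isLt
      rw [show F2aux k l (Sum.inr (Sum.inl q)) =
        Sum.inl ((k + 4 * (q : ℕ) + 1 : ℕ) : ZMod (k + 4 * l)) from rfl,
        show F2aux k l (Sum.inr (Sum.inl q')) =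
        Sum.inl ((k + 4 * (q' : ℕ) + 1 : ℕ) : ZMod (k + 4 * l)) from rfl,
        Sum.inl.injEq, castEq hn (by omega) (by omega)] at hxy
      have : (q : ℕ) = (q' : ℕ) := by omega
      simp [Sum.inr.injEq, Sum.inl.injEq, Fin.ext_iff, this]
    | Sum.inr (Sum.inl q), Sum.inr (Sum.inr q') =>
      have hq := q.isLt; have hq' := q'.isLt
      rw [show F2aux k l (Sum.inr (Sum.inl q)) =
        Sum.inl ((k + 4 * (q : ℕ) + 1 : ℕ) : ZMod (k + 4 * l)) from rfl,
        show F2aux k l (Sum.inr (Sum.inr q')) =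
        Sum.inl ((k + 4 * (q' : ℕ) + 2 : ℕ) : ZMod (k + 4 * l)) from rfl,
        Sum.inl.injEq, castEq hn (by omega) (by omega)] at hxy
      omega
    | Sum.inr (Sum.inr q), Sum.inr (Sum.inl q') =>
      have hq := q.isLt; have hq' := q'.isLt
      rw [show F2aux k l (Sum.inr (Sum.inr q)) =
        Sum.inl ((k + 4 * (q : ℕ) + 2 : ℕ) : ZMod (k + 4 * l)) from rfl,
        show F2aux k l (Sum.inr (Sum.inl q')) =
        Sum.inl ((k + 4 * (q' : ℕ) + 1 : ℕ) : ZMod (k + 4 * l)) from rfl,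
        Sum.inl.injEq, castEq hn (by omega) (by omega)] at hxy
      omega
    | Sum.inr (Sum.inr q), Sum.inr (Sum.inr q') =>
      have hq := q.isLt; have hq' := q'.isLt
      rw [show F2aux k l (Sum.inr (Sum.inr q)) =
        Sum.inl ((k + 4 * (q : ℕ) + 2 : ℕ) : ZMod (k + 4 * l)) from rfl,
        show F2aux k l (Sum.inr (Sum.inr q')) =
        Sum.inl ((k + 4 * (q' : ℕ) + 2 : ℕ) : ZMod (k + 4 * l)) from rfl,
        Sum.inl.injEq, castEq hn (by omega) (by omega)] at hxy
      have : (q : ℕ) = (q' : ℕ) := by omega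
      simp [Sum.inr.injEq, Fin.ext_iff, this]

end TAux
namespace TAux
variable {k l : ℕ}

lemma F3_inl (j : Fin k) : F3aux k l (Sum.inl j) =
    Sum.inl (((j : ℕ) : ZMod (k + 4 * l))) := rfl
lemma F3_c0 (q : Fin l) : F3aux k l (Sum.inr (Sum.inl q)) =
    Sum.inl (((k + 4 * (q : ℕ) : ℕ) : ZMod (k + 4 * l))) := rfl
lemma F3_c3 (q : Fin l) : F3aux k l (Sum.inr (Sum.inr q)) =
    Sum.inl (((k + 4 * (q : ℕ) + 3 : ℕ) : ZMod (k + 4 * l))) := rfl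

lemma nk3 (hn : 5 ≤ k + 4 * l) : nk (Tgraph k l) 3 = k + 2 * l := by
  haveI : NeZero (k + 4 * l) := ⟨by omega⟩
  have hset : {v | deg (Tgraph k l) v = 3} = Set.range (F3aux k l) := by
    ext v
    simp only [mem_setOf_eq, Set.mem_range]
    match v with
    | Sum.inl i =>
      have hvl := val_lt' hn i
      rw [deg_inl hn i]
      constructor
      · intro hd
        have h4 : (i.val - k) % 4 = 0 ∨ (i.val - k) % 4 = 3 := by
          by_contra hc; rw [if_neg hc] at hd; omega
        rcases Nat.lt_or_ge i.val k with hlt | hge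
        · refine ⟨Sum.inl ⟨i.val, hlt⟩, ?_⟩
          rw [F3_inl, Sum.inl.injEq, eq_comm, eqCast hn (by omega)]
        · have ht : i.val - k < 4 * l := by omega
          rcases h4 with h0 | h3
          · refine ⟨Sum.inr (Sum.inl ⟨(i.val - k) / 4, by omega⟩), ?_⟩
            rw [F3_c0, Sum.inl.injEq, eq_comm, eqCast hn (by omega)]
            show i.val = k + 4 * ((i.val - k) / 4)
            omega
          · refine ⟨Sum.inr (Sum.inr ⟨(i.val - k) / 4, by omega⟩), ?_⟩
            rw [F3_c3, Sum.inl.injEq, eq_comm, eqCast hn (by omega)]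
            show i.val = k + 4 * ((i.val - k) / 4) + 3
            omega
      · rintro ⟨x, hx⟩
        match x with
        | Sum.inl j =>
          have hj := j.isLt
          rw [F3_inl, Sum.inl.injEq] at hx
          have : i.val = (j : ℕ) := by rw [← hx, ZMod.val_natCast_of_lt (by omega)]
          rw [if_pos (by omega)]
        | Sum.inr (Sum.inl q) =>
          have hq := q.isLt
          rw [F3_c0, Sum.inl.injEq] at hx
          have : i.val = k + 4 * (q : ℕ) := by
            rw [← hx, ZMod.val_natCast_of_lt (by omega)]
          rw [if_pos (by omega)]
        | Sum.inr (Sum.inr q) =>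
          have hq := q.isLt
          rw [F3_c3, Sum.inl.injEq] at hx
          have : i.val = k + 4 * (q : ℕ) + 3 := by
            rw [← hx, ZMod.val_natCast_of_lt (by omega)]
          rw [if_pos (by omega)]
    | Sum.inr (Sum.inl j) =>
      rw [deg_pend hn j]
      constructor
      · omega
      · rintro ⟨x, hx⟩
        match x with
        | Sum.inl q => cases hx
        | Sum.inr (Sum.inl q) => cases hx
        | Sum.inr (Sum.inr q) => cases hx
    | Sum.inr (Sum.inr j) =>
      rw [deg_chord hn j]
      constructor
      · omega
      · rintro ⟨x, hx⟩
        match x with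
        | Sum.inl q => cases hx
        | Sum.inr (Sum.inl q) => cases hx
        | Sum.inr (Sum.inr q) => cases hx
  rw [nk, hset, ncard_range_inj]
  · simp only [Fintype.card_sum, Fintype.card_fin]; ring
  · intro x y hxy
    match x, y with
    | Sum.inl j, Sum.inl j' =>
      have hj := j.isLt; have hj' := j'.isLt
      rw [F3_inl, F3_inl, Sum.inl.injEq, castEq hn (by omega) (by omega)] at hxy
      simp [Fin.ext_iff, hxy]
    | Sum.inl j, Sum.inr (Sum.inl q) =>
      have hj := j.isLt; have hq := q.isLt
      rw [F3_inl, F3_c0, Sum.inl.injEq, castEq hn (by omega) (by omega)] at hxy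
      omega
    | Sum.inl j, Sum.inr (Sum.inr q) =>
      have hj := j.isLt; have hq := q.isLt
      rw [F3_inl, F3_c3, Sum.inl.injEq, castEq hn (by omega) (by omega)] at hxy
      omega
    | Sum.inr (Sum.inl q), Sum.inl j =>
      have hj := j.isLt; have hq := q.isLt
      rw [F3_inl, F3_c0, Sum.inl.injEq, castEq hn (by omega) (by omega)] at hxy
      omega
    | Sum.inr (Sum.inr q), Sum.inl j =>
      have hj := j.isLt; have hq := q.isLt
      rw [F3_inl, F3_c3, Sum.inl.injEq, castEq hn (by omega) (by omega)] at hxy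
      omega
    | Sum.inr (Sum.inl q), Sum.inr (Sum.inl q') =>
      have hq := q.isLt; have hq' := q'.isLt
      rw [F3_c0, F3_c0, Sum.inl.injEq, castEq hn (by omega) (by omega)] at hxy
      have : (q : ℕ) = (q' : ℕ) := by omega
      simp [Fin.ext_iff, this]
    | Sum.inr (Sum.inl q), Sum.inr (Sum.inr q') =>
      have hq := q.isLt; have hq' := q'.isLt
      rw [F3_c0, F3_c3, Sum.inl.injEq, castEq hn (by omega) (by omega)] at hxy
      omega
    | Sum.inr (Sum.inr q), Sum.inr (Sum.inl q') =>
      have hq := q.isLt; have hq' := q'.isLt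
      rw [F3_c3, F3_c0, Sum.inl.injEq, castEq hn (by omega) (by omega)] at hxy
      omega
    | Sum.inr (Sum.inr q), Sum.inr (Sum.inr q') =>
      have hq := q.isLt; have hq' := q'.isLt
      rw [F3_c3, F3_c3, Sum.inl.injEq, castEq hn (by omega) (by omega)] at hxy
      have : (q : ℕ) = (q' : ℕ) := by omega
      simp [Fin.ext_iff, this]

end TAux
namespace TAux
variable {k l : ℕ}

lemma FS_p (j : Fin k) : FSaux k l (Sum.inl j) = Sum.inr (Sum.inl j) := rfl
lemma FS_c (q : Fin l) : FSaux k l (Sum.inr (Sum.inl q)) = Sum.inr (Sum.inr q) := rfl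

lemma FS_m (q : Fin l) : FSaux k l (Sum.inr (Sum.inr q)) =
    Sum.inl ((k + 4 * (q : ℕ) + 1 : ℕ) : ZMod (k + 4 * l)) := rfl

lemma FS_inj (hn : 5 ≤ k + 4 * l) : Function.Injective (FSaux k l) := by
  intro x y hxy
  match x, y with
  | Sum.inl j, Sum.inl j' =>
    have h' : (Sum.inr (Sum.inl j) : ZMod (k + 4 * l) ⊕ (Fin k ⊕ Fin l)) =
        Sum.inr (Sum.inl j') := hxy
    simpa using h'
  | Sum.inl j, Sum.inr (Sum.inl q) => cases hxy
  | Sum.inl j, Sum.inr (Sum.inr q) => cases hxy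
  | Sum.inr (Sum.inl q), Sum.inl j => cases hxy
  | Sum.inr (Sum.inr q), Sum.inl j => cases hxy
  | Sum.inr (Sum.inl q), Sum.inr (Sum.inl q') =>
    have h' : (Sum.inr (Sum.inr q) : ZMod (k + 4 * l) ⊕ (Fin k ⊕ Fin l)) =
        Sum.inr (Sum.inr q') := hxy
    simpa using h'
  | Sum.inr (Sum.inl q), Sum.inr (Sum.inr q') => cases hxy
  | Sum.inr (Sum.inr q), Sum.inr (Sum.inl q') => cases hxy
  | Sum.inr (Sum.inr q), Sum.inr (Sum.inr q') =>
    have hq := q.isLt; have hq' := q'.isLt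
    rw [FS_m, FS_m, Sum.inl.injEq, castEq hn (by omega) (by omega)] at hxy
    have : (q : ℕ) = (q' : ℕ) := by omega
    simp [Fin.ext_iff, this]

lemma S_ncard (hn : 5 ≤ k + 4 * l) : (Set.range (FSaux k l)).ncard = k + 2 * l := by
  haveI : NeZero (k + 4 * l) := ⟨by omega⟩
  rw [ncard_range_inj _ (FS_inj hn)]
  simp only [Fintype.card_sum, Fintype.card_fin]
  ring

lemma S_indepdom (hn : 5 ≤ k + 4 * l) :
    IsIndepDomSet (Tgraph k l) (Set.range (FSaux k l)) := by
  haveI : NeZero (k + 4 * l) := ⟨by omega⟩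
  constructor
  · -- dominating
    intro v hv
    match v with
    | Sum.inr (Sum.inl j) => exact absurd ⟨Sum.inl j, rfl⟩ hv
    | Sum.inr (Sum.inr q) => exact absurd ⟨Sum.inr (Sum.inl q), rfl⟩ hv
    | Sum.inl i =>
      have hvl := val_lt' hn i
      rcases Nat.lt_or_ge i.val k with hlt | hge
      · refine ⟨Sum.inr (Sum.inl ⟨i.val, hlt⟩), ⟨Sum.inl ⟨i.val, hlt⟩, rfl⟩, ?_⟩
        rw [(Tgraph k l).adj_comm, adj_lp hn]
      · have ht : i.val - k < 4 * l := by omega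
        have hq : (i.val - k) / 4 < l := by omega
        have hqv : ((⟨(i.val - k) / 4, hq⟩ : Fin l) : ℕ) = (i.val - k) / 4 := rfl
        rcases (by omega : (i.val - k) % 4 = 0 ∨ (i.val - k) % 4 = 1 ∨
            (i.val - k) % 4 = 2 ∨ (i.val - k) % 4 = 3) with h | h | h | h
        · refine ⟨Sum.inr (Sum.inr ⟨(i.val - k) / 4, hq⟩),
            ⟨Sum.inr (Sum.inl ⟨(i.val - k) / 4, hq⟩), rfl⟩, ?_⟩
          rw [(Tgraph k l).adj_comm, adj_lc hn]
          left; rw [hqv]; omega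
        · refine absurd ⟨Sum.inr (Sum.inr ⟨(i.val - k) / 4, hq⟩), ?_⟩ hv
          rw [FS_m, Sum.inl.injEq, eq_comm, eqCast hn (by rw [hqv]; omega)]
          rw [hqv]; omega
        · refine ⟨Sum.inl ((k + 4 * ((i.val - k) / 4) + 1 : ℕ) : ZMod (k + 4 * l)),
            ⟨Sum.inr (Sum.inr ⟨(i.val - k) / 4, hq⟩), rfl⟩, ?_⟩
          rw [adj_ll hn]
          left
          rw [cast_add_one, eqCast hn (by omega)]
          omega
        · refine ⟨Sum.inr (Sum.inr ⟨(i.val - k) / 4, hq⟩),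
            ⟨Sum.inr (Sum.inl ⟨(i.val - k) / 4, hq⟩), rfl⟩, ?_⟩
          rw [(Tgraph k l).adj_comm, adj_lc hn]
          right; rw [hqv]; omega
  · -- independent
    rintro u ⟨x, rfl⟩ v ⟨y, rfl⟩ hadj
    match x, y with
    | Sum.inl j, Sum.inl j' => exact not_adj_rr hadj
    | Sum.inl j, Sum.inr (Sum.inl q) => exact not_adj_rr hadj
    | Sum.inr (Sum.inl q), Sum.inl j => exact not_adj_rr hadj
    | Sum.inr (Sum.inl q), Sum.inr (Sum.inl q') => exact not_adj_rr hadj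
    | Sum.inl j, Sum.inr (Sum.inr q) =>
      have hj := j.isLt; have hq := q.isLt
      rw [FS_m, FS_p] at hadj
      have h' := ((Tgraph k l).adj_comm _ _).mp hadj
      rw [adj_lp hn, ZMod.val_natCast_of_lt (by omega)] at h'
      omega
    | Sum.inr (Sum.inr q), Sum.inl j =>
      have hj := j.isLt; have hq := q.isLt
      rw [FS_m, FS_p] at hadj
      rw [adj_lp hn, ZMod.val_natCast_of_lt (by omega)] at hadj
      omega
    | Sum.inr (Sum.inl q), Sum.inr (Sum.inr q') =>
      have hq := q.isLt; have hq' := q'.isLt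
      rw [FS_m, FS_c] at hadj
      have h' := ((Tgraph k l).adj_comm _ _).mp hadj
      rw [adj_lc hn, ZMod.val_natCast_of_lt (by omega)] at h'
      omega
    | Sum.inr (Sum.inr q), Sum.inr (Sum.inl q') =>
      have hq := q.isLt; have hq' := q'.isLt
      rw [FS_m, FS_c] at hadj
      rw [adj_lc hn, ZMod.val_natCast_of_lt (by omega)] at hadj
      omega
    | Sum.inr (Sum.inr q), Sum.inr (Sum.inr q') =>
      have hq := q.isLt; have hq' := q'.isLt
      rw [FS_m, FS_m, adj_ll_val hn (by omega) (by omega),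
        Nat.mod_eq_of_lt (by omega), Nat.mod_eq_of_lt (by omega)] at hadj
      omega

end TAux
/-- tag function used to prove injectivity of choice functions -/
def tagf (k l : ℕ) : (ZMod (k + 4 * l) ⊕ (Fin k ⊕ Fin l)) → ℕ
  | .inl i => if i.val < k then i.val else k + (i.val - k) / 4
  | .inr (.inl j) => (j : ℕ)
  | .inr (.inr q) => k + (q : ℕ)

/-- block membership predicate -/
def BB (k l : ℕ) (q : Fin l) (u : ZMod (k + 4 * l) ⊕ (Fin k ⊕ Fin l)) : Prop :=
  u = Sum.inr (Sum.inr q) ∨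
  u = Sum.inl ((k + 4 * (q : ℕ) : ℕ) : ZMod (k + 4 * l)) ∨
  u = Sum.inl ((k + 4 * (q : ℕ) + 1 : ℕ) : ZMod (k + 4 * l)) ∨
  u = Sum.inl ((k + 4 * (q : ℕ) + 2 : ℕ) : ZMod (k + 4 * l)) ∨
  u = Sum.inl ((k + 4 * (q : ℕ) + 3 : ℕ) : ZMod (k + 4 * l))

namespace TAux
variable {k l : ℕ}

lemma tagf_inl (i : ZMod (k + 4 * l)) :
    tagf k l (Sum.inl i) = if i.val < k then i.val else k + (i.val - k) / 4 := rfl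

lemma dom_closed {S : Set (ZMod (k + 4 * l) ⊕ (Fin k ⊕ Fin l))}
    (hS : IsDomSet (Tgraph k l) S) (v : ZMod (k + 4 * l) ⊕ (Fin k ⊕ Fin l)) :
    ∃ u ∈ S, u = v ∨ (Tgraph k l).Adj u v := by
  by_cases hv : v ∈ S
  · exact ⟨v, hv, Or.inl rfl⟩
  · obtain ⟨u, huS, hu⟩ := hS v hv
    exact ⟨u, huS, Or.inr hu⟩

lemma pick_pend (hn : 5 ≤ k + 4 * l) {S : Set (ZMod (k + 4 * l) ⊕ (Fin k ⊕ Fin l))}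
    (hS : IsDomSet (Tgraph k l) S) (j : Fin k) :
    ∃ u ∈ S, u = Sum.inr (Sum.inl j) ∨ u = Sum.inl (((j : ℕ) : ZMod (k + 4 * l))) := by
  obtain ⟨u, huS, hu⟩ := dom_closed hS (Sum.inr (Sum.inl j))
  refine ⟨u, huS, ?_⟩
  rcases hu with rfl | hadj
  · exact Or.inl rfl
  · match u with
    | Sum.inl i =>
      right
      rw [adj_lp hn] at hadj
      rw [Sum.inl.injEq, eqCast hn (by omega)]
      exact hadj
    | Sum.inr a => exact absurd hadj not_adj_rr

lemma pick_chord (hn : 5 ≤ k + 4 * l) {S : Set (ZMod (k + 4 * l) ⊕ (Fin k ⊕ Fin l))}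
    (hS : IsDomSet (Tgraph k l) S) (q : Fin l) :
    ∃ u ∈ S, u = Sum.inr (Sum.inr q) ∨
      u = Sum.inl ((k + 4 * (q : ℕ) : ℕ) : ZMod (k + 4 * l)) ∨
      u = Sum.inl ((k + 4 * (q : ℕ) + 3 : ℕ) : ZMod (k + 4 * l)) := by
  have hq := q.isLt
  obtain ⟨u, huS, hu⟩ := dom_closed hS (Sum.inr (Sum.inr q))
  refine ⟨u, huS, ?_⟩
  rcases hu with rfl | hadj
  · exact Or.inl rfl
  · match u with
    | Sum.inl i =>
      right
      rw [adj_lc hn] at hadj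
      rcases hadj with h | h
      · left; rw [Sum.inl.injEq, eqCast hn (by omega)]; exact h
      · right; rw [Sum.inl.injEq, eqCast hn (by omega)]; exact h
    | Sum.inr a => exact absurd hadj not_adj_rr

lemma not_pend_adj_mid (hn : 5 ≤ k + 4 * l) {q : Fin l} {r : ℕ} (hr : r = 1 ∨ r = 2)
    {u : Fin k ⊕ Fin l}
    (hadj : (Tgraph k l).Adj (Sum.inr u)
      (Sum.inl ((k + 4 * (q : ℕ) + r : ℕ) : ZMod (k + 4 * l)))) : False := by
  have hq := q.isLt
  match u with
  | Sum.inl j =>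
    have hj := j.isLt
    have h' := ((Tgraph k l).adj_comm _ _).mp hadj
    rw [adj_lp hn, ZMod.val_natCast_of_lt (by omega)] at h'
    omega
  | Sum.inr j =>
    have hj := j.isLt
    have h' := ((Tgraph k l).adj_comm _ _).mp hadj
    rw [adj_lc hn, ZMod.val_natCast_of_lt (by omega)] at h'
    omega

lemma pick_mid1 (hn : 5 ≤ k + 4 * l) {S : Set (ZMod (k + 4 * l) ⊕ (Fin k ⊕ Fin l))}
    (hS : IsDomSet (Tgraph k l) S) (q : Fin l) :
    ∃ u ∈ S, u = Sum.inl ((k + 4 * (q : ℕ) : ℕ) : ZMod (k + 4 * l)) ∨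
      u = Sum.inl ((k + 4 * (q : ℕ) + 1 : ℕ) : ZMod (k + 4 * l)) ∨
      u = Sum.inl ((k + 4 * (q : ℕ) + 2 : ℕ) : ZMod (k + 4 * l)) := by
  have hq := q.isLt
  obtain ⟨u, huS, hu⟩ :=
    dom_closed hS (Sum.inl ((k + 4 * (q : ℕ) + 1 : ℕ) : ZMod (k + 4 * l)))
  refine ⟨u, huS, ?_⟩
  rcases hu with rfl | hadj
  · exact Or.inr (Or.inl rfl)
  · match u with
    | Sum.inl i =>
      rw [adj_ll hn] at hadj
      rcases hadj with h | h
      · left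
        have h' : i = ((k + 4 * (q : ℕ) + 1 : ℕ) : ZMod (k + 4 * l)) - 1 := by rw [h]; ring
        have hrw : ((k + 4 * (q : ℕ) + 1 : ℕ) : ZMod (k + 4 * l)) - 1 =
            ((k + 4 * (q : ℕ) : ℕ) : ZMod (k + 4 * l)) := by push_cast; ring
        exact congrArg Sum.inl (h'.trans hrw)
      · right; right
        have h' : i = ((k + 4 * (q : ℕ) + 1 : ℕ) : ZMod (k + 4 * l)) + 1 := by rw [h]; ring
        have hrw : ((k + 4 * (q : ℕ) + 1 : ℕ) : ZMod (k + 4 * l)) + 1 =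
            ((k + 4 * (q : ℕ) + 2 : ℕ) : ZMod (k + 4 * l)) := by push_cast; ring
        exact congrArg Sum.inl (h'.trans hrw)
    | Sum.inr a => exact absurd hadj (fun hc => not_pend_adj_mid hn (Or.inl rfl) hc)

lemma pick_mid2 (hn : 5 ≤ k + 4 * l) {S : Set (ZMod (k + 4 * l) ⊕ (Fin k ⊕ Fin l))}
    (hS : IsDomSet (Tgraph k l) S) (q : Fin l) :
    ∃ u ∈ S, u = Sum.inl ((k + 4 * (q : ℕ) + 1 : ℕ) : ZMod (k + 4 * l)) ∨
      u = Sum.inl ((k + 4 * (q : ℕ) + 2 : ℕ) : ZMod (k + 4 * l)) ∨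
      u = Sum.inl ((k + 4 * (q : ℕ) + 3 : ℕ) : ZMod (k + 4 * l)) := by
  have hq := q.isLt
  obtain ⟨u, huS, hu⟩ :=
    dom_closed hS (Sum.inl ((k + 4 * (q : ℕ) + 2 : ℕ) : ZMod (k + 4 * l)))
  refine ⟨u, huS, ?_⟩
  rcases hu with rfl | hadj
  · exact Or.inr (Or.inl rfl)
  · match u with
    | Sum.inl i =>
      rw [adj_ll hn] at hadj
      rcases hadj with h | h
      · left
        have h' : i = ((k + 4 * (q : ℕ) + 2 : ℕ) : ZMod (k + 4 * l)) - 1 := by rw [h]; ring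
        have hrw : ((k + 4 * (q : ℕ) + 2 : ℕ) : ZMod (k + 4 * l)) - 1 =
            ((k + 4 * (q : ℕ) + 1 : ℕ) : ZMod (k + 4 * l)) := by push_cast; ring
        exact congrArg Sum.inl (h'.trans hrw)
      · right; right
        have h' : i = ((k + 4 * (q : ℕ) + 2 : ℕ) : ZMod (k + 4 * l)) + 1 := by rw [h]; ring
        have hrw : ((k + 4 * (q : ℕ) + 2 : ℕ) : ZMod (k + 4 * l)) + 1 =
            ((k + 4 * (q : ℕ) + 3 : ℕ) : ZMod (k + 4 * l)) := by push_cast; ring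
        exact congrArg Sum.inl (h'.trans hrw)
    | Sum.inr a => exact absurd hadj (fun hc => not_pend_adj_mid hn (Or.inr rfl) hc)

lemma inl_cast_ne (hn : 5 ≤ k + 4 * l) {a b : ℕ} (ha : a < k + 4 * l) (hb : b < k + 4 * l)
    (hab : a ≠ b) :
    (Sum.inl ((a : ℕ) : ZMod (k + 4 * l)) : ZMod (k + 4 * l) ⊕ (Fin k ⊕ Fin l)) ≠
      Sum.inl ((b : ℕ) : ZMod (k + 4 * l)) := by
  intro h
  rw [Sum.inl.injEq, castEq hn ha hb] at h
  exact hab h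

lemma inl_cast_inj (hn : 5 ≤ k + 4 * l) {a b : ℕ} (ha : a < k + 4 * l) (hb : b < k + 4 * l)
    (h : (Sum.inl ((a : ℕ) : ZMod (k + 4 * l)) : ZMod (k + 4 * l) ⊕ (Fin k ⊕ Fin l)) =
      Sum.inl ((b : ℕ) : ZMod (k + 4 * l))) : a = b := by
  rw [Sum.inl.injEq] at h
  exact (castEq hn ha hb).mp h

lemma pick_block (hn : 5 ≤ k + 4 * l) {S : Set (ZMod (k + 4 * l) ⊕ (Fin k ⊕ Fin l))}
    (hS : IsDomSet (Tgraph k l) S) (q : Fin l) :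
    ∃ u ∈ S, ∃ w ∈ S, u ≠ w ∧ BB k l q u ∧ BB k l q w := by
  have hq := q.isLt
  obtain ⟨a, haS, ha⟩ := pick_mid1 hn hS q
  obtain ⟨b, hbS, hb⟩ := pick_chord hn hS q
  obtain ⟨c, hcS, hc⟩ := pick_mid2 hn hS q
  have hBa : BB k l q a := by
    rcases ha with rfl | rfl | rfl
    · exact Or.inr (Or.inl rfl)
    · exact Or.inr (Or.inr (Or.inl rfl))
    · exact Or.inr (Or.inr (Or.inr (Or.inl rfl)))
  have hBb : BB k l q b := by
    rcases hb with rfl | rfl | rfl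
    · exact Or.inl rfl
    · exact Or.inr (Or.inl rfl)
    · exact Or.inr (Or.inr (Or.inr (Or.inr rfl)))
  have hBc : BB k l q c := by
    rcases hc with rfl | rfl | rfl
    · exact Or.inr (Or.inr (Or.inl rfl))
    · exact Or.inr (Or.inr (Or.inr (Or.inl rfl)))
    · exact Or.inr (Or.inr (Or.inr (Or.inr rfl)))
  by_cases hab : a = b
  · -- then a = inl (cast (k + 4q)), and c differs from a
    have ha0 : a = Sum.inl ((k + 4 * (q : ℕ) : ℕ) : ZMod (k + 4 * l)) := by
      rcases hb with rfl | rfl | rfl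
      · rcases ha with rfl | rfl | rfl
        · rfl
        · simp at hab
        · simp at hab
      · rcases ha with rfl | rfl | rfl
        · rfl
        · have := inl_cast_inj hn (by omega) (by omega) hab; omega
        · have := inl_cast_inj hn (by omega) (by omega) hab; omega
      · rcases ha with rfl | rfl | rfl
        · rfl
        · have := inl_cast_inj hn (by omega) (by omega) hab; omega
        · have := inl_cast_inj hn (by omega) (by omega) hab; omega
    have hca : a ≠ c := by
      rw [ha0]
      rcases hc with rfl | rfl | rfl
      all_goals intro hcon
      all_goals have := inl_cast_inj hn (by omega) (by omega) hcon
      all_goals omega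
    exact ⟨a, haS, c, hcS, hca, hBa, hBc⟩
  · exact ⟨a, haS, b, hbS, hab, hBa, hBb⟩

lemma tag_pend_pick (hn : 5 ≤ k + 4 * l) {j : Fin k}
    {u : ZMod (k + 4 * l) ⊕ (Fin k ⊕ Fin l)}
    (h : u = Sum.inr (Sum.inl j) ∨ u = Sum.inl (((j : ℕ) : ZMod (k + 4 * l)))) :
    tagf k l u = (j : ℕ) := by
  have hj := j.isLt
  rcases h with rfl | rfl
  · rfl
  · rw [tagf_inl, ZMod.val_natCast_of_lt (by omega), if_pos (by omega)]

lemma tag_block_pick (hn : 5 ≤ k + 4 * l) {q : Fin l}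
    {u : ZMod (k + 4 * l) ⊕ (Fin k ⊕ Fin l)} (h : BB k l q u) :
    tagf k l u = k + (q : ℕ) := by
  have hq := q.isLt
  rcases h with rfl | rfl | rfl | rfl | rfl
  · rfl
  all_goals rw [tagf_inl, ZMod.val_natCast_of_lt (by omega), if_neg (by omega)]
  all_goals omega

lemma dom_lower (hn : 5 ≤ k + 4 * l) (S : Set (ZMod (k + 4 * l) ⊕ (Fin k ⊕ Fin l)))
    (hS : IsDomSet (Tgraph k l) S) : k + 2 * l ≤ S.ncard := by
  haveI : NeZero (k + 4 * l) := ⟨by omega⟩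
  choose f hfS hf using fun j : Fin k => pick_pend hn hS j
  choose g1 hg1S g2 hg2S hgne hg1 hg2 using fun q : Fin l => pick_block hn hS q
  have hsub : Set.range (Sum.elim f (Sum.elim g1 g2)) ⊆ S := by
    rintro v ⟨x, rfl⟩
    match x with
    | Sum.inl j => exact hfS j
    | Sum.inr (Sum.inl q) => exact hg1S q
    | Sum.inr (Sum.inr q) => exact hg2S q
  have hinj : Function.Injective (Sum.elim f (Sum.elim g1 g2)) := by
    intro x y hxy
    have htag := congrArg (tagf k l) hxy
    match x, y with
    | Sum.inl j, Sum.inl j' =>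
      have h1 : tagf k l (f j) = (j : ℕ) := tag_pend_pick hn (hf j)
      have h2 : tagf k l (f j') = (j' : ℕ) := tag_pend_pick hn (hf j')
      have : (j : ℕ) = (j' : ℕ) := by
        rw [← h1, ← h2]; exact htag
      simp [Fin.ext_iff, this]
    | Sum.inl j, Sum.inr (Sum.inl q) =>
      have h1 : tagf k l (f j) = (j : ℕ) := tag_pend_pick hn (hf j)
      have h2 : tagf k l (g1 q) = k + (q : ℕ) := tag_block_pick hn (hg1 q)
      have hj := j.isLt
      rw [show tagf k l (Sum.elim f (Sum.elim g1 g2) (Sum.inl j)) = tagf k l (f j) from rfl,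
        show tagf k l (Sum.elim f (Sum.elim g1 g2) (Sum.inr (Sum.inl q))) = tagf k l (g1 q)
          from rfl, h1, h2] at htag
      omega
    | Sum.inl j, Sum.inr (Sum.inr q) =>
      have h1 : tagf k l (f j) = (j : ℕ) := tag_pend_pick hn (hf j)
      have h2 : tagf k l (g2 q) = k + (q : ℕ) := tag_block_pick hn (hg2 q)
      have hj := j.isLt
      rw [show tagf k l (Sum.elim f (Sum.elim g1 g2) (Sum.inl j)) = tagf k l (f j) from rfl,
        show tagf k l (Sum.elim f (Sum.elim g1 g2) (Sum.inr (Sum.inr q))) = tagf k l (g2 q)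
          from rfl, h1, h2] at htag
      omega
    | Sum.inr (Sum.inl q), Sum.inl j =>
      have h1 : tagf k l (f j) = (j : ℕ) := tag_pend_pick hn (hf j)
      have h2 : tagf k l (g1 q) = k + (q : ℕ) := tag_block_pick hn (hg1 q)
      have hj := j.isLt
      rw [show tagf k l (Sum.elim f (Sum.elim g1 g2) (Sum.inl j)) = tagf k l (f j) from rfl,
        show tagf k l (Sum.elim f (Sum.elim g1 g2) (Sum.inr (Sum.inl q))) = tagf k l (g1 q)
          from rfl, h1, h2] at htag
      omega
    | Sum.inr (Sum.inr q), Sum.inl j =>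
      have h1 : tagf k l (f j) = (j : ℕ) := tag_pend_pick hn (hf j)
      have h2 : tagf k l (g2 q) = k + (q : ℕ) := tag_block_pick hn (hg2 q)
      have hj := j.isLt
      rw [show tagf k l (Sum.elim f (Sum.elim g1 g2) (Sum.inl j)) = tagf k l (f j) from rfl,
        show tagf k l (Sum.elim f (Sum.elim g1 g2) (Sum.inr (Sum.inr q))) = tagf k l (g2 q)
          from rfl, h1, h2] at htag
      omega
    | Sum.inr (Sum.inl q), Sum.inr (Sum.inl q') =>
      have h1 : tagf k l (g1 q) = k + (q : ℕ) := tag_block_pick hn (hg1 q)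
      have h2 : tagf k l (g1 q') = k + (q' : ℕ) := tag_block_pick hn (hg1 q')
      have : (q : ℕ) = (q' : ℕ) := by
        have := htag
        rw [show tagf k l (Sum.elim f (Sum.elim g1 g2) (Sum.inr (Sum.inl q))) = tagf k l (g1 q)
            from rfl,
          show tagf k l (Sum.elim f (Sum.elim g1 g2) (Sum.inr (Sum.inl q'))) = tagf k l (g1 q')
            from rfl, h1, h2] at this
        omega
      simp [Fin.ext_iff, this]
    | Sum.inr (Sum.inr q), Sum.inr (Sum.inr q') =>
      have h1 : tagf k l (g2 q) = k + (q : ℕ) := tag_block_pick hn (hg2 q)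
      have h2 : tagf k l (g2 q') = k + (q' : ℕ) := tag_block_pick hn (hg2 q')
      have : (q : ℕ) = (q' : ℕ) := by
        have := htag
        rw [show tagf k l (Sum.elim f (Sum.elim g1 g2) (Sum.inr (Sum.inr q))) = tagf k l (g2 q)
            from rfl,
          show tagf k l (Sum.elim f (Sum.elim g1 g2) (Sum.inr (Sum.inr q'))) = tagf k l (g2 q')
            from rfl, h1, h2] at this
        omega
      simp [Fin.ext_iff, this]
    | Sum.inr (Sum.inl q), Sum.inr (Sum.inr q') =>
      have h1 : tagf k l (g1 q) = k + (q : ℕ) := tag_block_pick hn (hg1 q)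
      have h2 : tagf k l (g2 q') = k + (q' : ℕ) := tag_block_pick hn (hg2 q')
      have hqq : (q : ℕ) = (q' : ℕ) := by
        have := htag
        rw [show tagf k l (Sum.elim f (Sum.elim g1 g2) (Sum.inr (Sum.inl q))) = tagf k l (g1 q)
            from rfl,
          show tagf k l (Sum.elim f (Sum.elim g1 g2) (Sum.inr (Sum.inr q'))) = tagf k l (g2 q')
            from rfl, h1, h2] at this
        omega
      have hq' : q = q' := Fin.ext hqq
      subst hq'
      exact absurd hxy (hgne q)
    | Sum.inr (Sum.inr q), Sum.inr (Sum.inl q') =>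
      have h1 : tagf k l (g2 q) = k + (q : ℕ) := tag_block_pick hn (hg2 q)
      have h2 : tagf k l (g1 q') = k + (q' : ℕ) := tag_block_pick hn (hg1 q')
      have hqq : (q : ℕ) = (q' : ℕ) := by
        have := htag
        rw [show tagf k l (Sum.elim f (Sum.elim g1 g2) (Sum.inr (Sum.inr q))) = tagf k l (g2 q)
            from rfl,
          show tagf k l (Sum.elim f (Sum.elim g1 g2) (Sum.inr (Sum.inl q'))) = tagf k l (g1 q')
            from rfl, h1, h2] at this
        omega
      have hq' : q = q' := Fin.ext hqq
      subst hq'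
      exact absurd hxy.symm (hgne q)
  calc k + 2 * l = (Set.range (Sum.elim f (Sum.elim g1 g2))).ncard := by
        rw [ncard_range_inj _ hinj]
        simp only [Fintype.card_sum, Fintype.card_fin]
        ring
    _ ≤ S.ncard := Set.ncard_le_ncard hsub (Set.toFinite S)

end TAux
/-- For `k + ℓ ≥ 5`, the graph `T_{k,ℓ}` satisfies `n₀ = 0`, `n₁ = k`, `n₂ = 3ℓ`,
`n₃ = k + 2ℓ` and `i(T_{k,ℓ}) = k + 2ℓ`; consequently equality
`14·i = 14·n₀ + 9·n₁ + 6·n₂ + 5·n₃` holds. -/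
theorem Tgraph_tight (k l : ℕ) (h : 5 ≤ k + l) :
    nk (Tgraph k l) 0 = 0 ∧ nk (Tgraph k l) 1 = k ∧ nk (Tgraph k l) 2 = 3 * l ∧
    nk (Tgraph k l) 3 = k + 2 * l ∧ indepDomNum (Tgraph k l) = k + 2 * l ∧
    14 * indepDomNum (Tgraph k l) =
      14 * nk (Tgraph k l) 0 + 9 * nk (Tgraph k l) 1 + 6 * nk (Tgraph k l) 2 +
        5 * nk (Tgraph k l) 3 := by
  have hn : 5 ≤ k + 4 * l := by omega
  have h0 := TAux.nk0 hn
  have h1 := TAux.nk1 hn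
  have h2 := TAux.nk2 hn
  have h3 := TAux.nk3 hn
  have hmem : (k + 2 * l) ∈
      {n | ∃ S : Set (ZMod (k + 4 * l) ⊕ (Fin k ⊕ Fin l)),
        IsIndepDomSet (Tgraph k l) S ∧ S.ncard = n} :=
    ⟨Set.range (FSaux k l), TAux.S_indepdom hn, TAux.S_ncard hn⟩
  have hup : indepDomNum (Tgraph k l) ≤ k + 2 * l := Nat.sInf_le hmem
  have hlow : k + 2 * l ≤ indepDomNum (Tgraph k l) := by
    obtain ⟨S, hS, hcard⟩ := Nat.sInf_mem ⟨k + 2 * l, hmem⟩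
    rw [indepDomNum, ← hcard]
    exact TAux.dom_lower hn S hS.1
  have hid : indepDomNum (Tgraph k l) = k + 2 * l := le_antisymm hup hlow
  refine ⟨h0, h1, h2, h3, hid, ?_⟩
  rw [h0, h1, h2, h3, hid]
  ring
end
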